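/- arXiv:1901.10697 — 11 statements merged into one kernel-verified Lean document; each statement's English description precedes it below -/
import Mathlib

section
/- Let v_1, ..., v_N be unit vectors in C^r. The following are equivalent: (1) the sum of v_i v_i^* equals (N/r) times the identity matrix on C^r; (2) the nonzero eigenvalues of the Gram matrix X = (⟨v_i, v_j⟩) all equal N/r; (3) the squared Frobenius norm of X equals N²/r. -/
/-!
Let `A` be the `r × N` matrix with columns `vᵢ`, so that the frame operator is `S = A Aᴴ` and the
Gram matrix is `X = Aᴴ A`; both have trace `N`, and `tr S² = tr X² = ‖X‖_F²`. Put `c = N / r`.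
If `S = c I` then `X² = c X`, which for the Hermitian `X` says exactly that its spectrum lies in
`{0, c}`, and gives `‖X‖_F² = c tr X = N² / r`. Conversely, `‖X‖_F² = N² / r` means
`tr ((S - c I)²) = tr S² - 2 c tr S + c² r = 0`, which forces the Hermitian `S - c I` to vanish.
-/

open Matrix

lemma Module.End.HasEigenvalue.eq_zero_or_eq_of_mul_self_eq_smul {K V : Type*} [Field K]
    [AddCommGroup V] [Module K V] {f : Module.End K V} {μ c : K} (hμ : f.HasEigenvalue μ)
    (hf : f * f = c • f) : μ = 0 ∨ μ = c := by
  obtain ⟨x, hx⟩ := hμ.exists_hasEigenvector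
  have hfx : (μ * μ) • x = (c * μ) • x := by
    simpa [hx.apply_eq_smul, smul_smul] using congr($hf x)
  have hμc : μ * (μ - c) = 0 := by linear_combination smul_left_injective K hx.2 hfx
  exact (mul_eq_zero.mp hμc).imp_right sub_eq_zero.mp

lemma mul_self_eq_smul_of_spectrum_subset {R A : Type*} {p : A → Prop} [CommSemiring R]
    [StarRing R] [MetricSpace R] [IsTopologicalSemiring R] [ContinuousStar R] [TopologicalSpace A]
    [Ring A] [StarRing A] [Algebra R A] [ContinuousFunctionalCalculus R A p] {a : A} (ha : p a)
    {c : R} (h : spectrum R a ⊆ {0, c}) : a * a = c • a := by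
  rw [← sq, ← cfc_pow_id (R := R) a 2 ha, ← cfc_const_mul_id c a ha]
  refine cfc_congr fun x hx => ?_
  rcases h hx with rfl | rfl <;> simp [sq]

namespace Matrix

lemma sum_vecMulVec_star {ι n α : Type*} [Fintype ι] [NonUnitalNonAssocSemiring α] [Star α]
    (v : ι → n → α) : ∑ i, vecMulVec (v i) (star (v i)) = (of v)ᵀ * (of v)ᵀᴴ := by
  ext k l
  simp [sum_apply, vecMulVec_apply, mul_apply]

lemma trace_mul_mul_self_comm {m n R : Type*} [Fintype m] [Fintype n] [CommSemiring R]
    (A : Matrix m n R) (B : Matrix n m R) : (A * B * (A * B)).trace = (B * A * (B * A)).trace := by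
  rw [Matrix.mul_assoc, trace_mul_comm]
  simp only [Matrix.mul_assoc]

variable {𝕜 : Type*} [RCLike 𝕜]

lemma trace_conjTranspose_mul_self_eq_sum_norm_sq {m n : Type*} [Fintype m] [Fintype n]
    (A : Matrix m n 𝕜) : (Aᴴ * A).trace = ((∑ j, ∑ i, ‖A i j‖ ^ 2 : ℝ) : 𝕜) := by
  simp only [trace, diag, mul_apply, conjTranspose_apply, RCLike.star_def, RCLike.conj_mul]
  push_cast
  rfl

variable {n : Type*} [Fintype n]

lemma IsHermitian.trace_mul_self {A : Matrix n n 𝕜} (hA : A.IsHermitian) :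
    (A * A).trace = ((∑ i, ∑ j, ‖A i j‖ ^ 2 : ℝ) : 𝕜) := by
  have h := trace_conjTranspose_mul_self_eq_sum_norm_sq A
  rwa [hA.eq, Finset.sum_comm] at h

variable [DecidableEq n]

lemma IsHermitian.forall_hasEigenvalue_iff_mul_self_eq_smul {A : Matrix n n 𝕜}
    (hA : A.IsHermitian) (c : ℝ) :
    (∀ μ : 𝕜, Module.End.HasEigenvalue (toLin' A) μ → μ = 0 ∨ μ = c) ↔
      A * A = (c : 𝕜) • A := by
  refine ⟨fun h => ?_, fun h μ hμ => hμ.eq_zero_or_eq_of_mul_self_eq_smul ?_⟩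
  · rw [← RCLike.real_smul_eq_coe_smul]
    refine mul_self_eq_smul_of_spectrum_subset hA.isSelfAdjoint fun x hx => ?_
    rw [← spectrum.algebraMap_mem_iff 𝕜, ← spectrum_toLin',
      ← Module.End.hasEigenvalue_iff_mem_spectrum] at hx
    simpa using h _ hx
  · rw [Module.End.mul_eq_comp, ← toLin'_mul, h, map_smul]

open scoped ComplexOrder in
lemma IsHermitian.eq_smul_one_of_trace_mul_self {S : Matrix n n 𝕜} (hS : S.IsHermitian) (c : ℝ)
    (h₁ : S.trace = c * Fintype.card n) (h₂ : (S * S).trace = c ^ 2 * Fintype.card n) :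
    S = (c : 𝕜) • 1 := by
  set Y := S - (c : 𝕜) • 1
  have hY : Yᴴ = Y := by simp [Y, hS.eq]
  have hYY : (Yᴴ * Y).trace = 0 := by
    simp only [hY, Y, sub_mul, mul_sub, Matrix.smul_mul, Matrix.mul_smul, Matrix.one_mul,
      Matrix.mul_one, trace_sub, trace_smul, trace_one, h₁, h₂, smul_eq_mul]
    ring
  exact sub_eq_zero.mp (trace_conjTranspose_mul_self_eq_zero_iff.mp hYY)

end Matrix

theorem stmt_0_general (N r : ℕ) (hr : 0 < r)
    (v : Fin N → Fin r → ℂ)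
    (hunit : ∀ i, ∑ k, ‖v i k‖ ^ 2 = 1)
    (X : Matrix (Fin N) (Fin N) ℂ)
    (hX : ∀ i j, X i j = ∑ k, (starRingEnd ℂ) (v i k) * v j k) :
    List.TFAE
      [ (∑ i, Matrix.vecMulVec (v i) (fun l => (starRingEnd ℂ) (v i l)))
          = ((N : ℂ) / (r : ℂ)) • (1 : Matrix (Fin r) (Fin r) ℂ),
        ∀ μ : ℂ, Module.End.HasEigenvalue (Matrix.toLin' X) μ →
          μ = 0 ∨ μ = (N : ℂ) / (r : ℂ),
        ∑ i, ∑ j, ‖X i j‖ ^ 2 = (N : ℝ) ^ 2 / (r : ℝ) ] := by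
  set A := (of v)ᵀ
  set c : ℝ := N / r
  have hr₀ : (r : ℂ) ≠ 0 := by exact_mod_cast hr.ne'
  have hN : (N : ℂ) = c * r := by push_cast [c]; field_simp
  have hN₂ : (((N : ℝ) ^ 2 / r : ℝ) : ℂ) = c ^ 2 * r := by push_cast [c]; field_simp
  have hXA : X = Aᴴ * A := by ext i j; simp [hX, mul_apply, A]
  have hX_herm : X.IsHermitian := hXA ▸ isHermitian_conjTranspose_mul_self A
  have htrX : X.trace = N := by simp [hXA, trace_conjTranspose_mul_self_eq_sum_norm_sq, A, hunit]
  have hS : (∑ i, vecMulVec (v i) fun l => (starRingEnd ℂ) (v i l)) = A * Aᴴ :=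
    sum_vecMulVec_star v
  have hev : (∀ μ : ℂ, Module.End.HasEigenvalue (toLin' X) μ → μ = 0 ∨ μ = c) ↔
      X * X = (c : ℂ) • X := hX_herm.forall_hasEigenvalue_iff_mul_self_eq_smul c
  have hfrob : (X * X).trace = ((∑ i, ∑ j, ‖X i j‖ ^ 2 : ℝ) : ℂ) := hX_herm.trace_mul_self
  rw [hS, show (N : ℂ) / r = c by push_cast [c]; rfl, hev, ← Complex.ofReal_injective.eq_iff,
    ← hfrob]
  tfae_have 1 → 2 := fun h => by
    rw [hXA, Matrix.mul_assoc, ← Matrix.mul_assoc A, h, Matrix.smul_mul, Matrix.one_mul,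
      Matrix.mul_smul]
  tfae_have 2 → 3 := fun h => by
    rw [h, trace_smul, htrX, hN₂, hN, smul_eq_mul]
    ring
  tfae_have 3 → 1 := fun h => by
    refine (isHermitian_mul_conjTranspose_self A).eq_smul_one_of_trace_mul_self c ?_ ?_
    · rw [trace_mul_comm, ← hXA, htrX, Fintype.card_fin]; exact hN
    · rw [trace_mul_mul_self_comm, ← hXA, h, Fintype.card_fin]; exact hN₂
  tfae_finish

/-- Equivalence of the three characterizations of a unit norm tight frame. -/
theorem stmt_0 (N r : ℕ) (hr : 0 < r) (hN : 0 < N)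
    (v : Fin N → Fin r → ℂ)
    (hunit : ∀ i, ∑ k, ‖v i k‖ ^ 2 = 1)
    (X : Matrix (Fin N) (Fin N) ℂ)
    (hX : ∀ i j, X i j = ∑ k, (starRingEnd ℂ) (v i k) * v j k) :
    List.TFAE
      [ (∑ i, Matrix.vecMulVec (v i) (fun l => (starRingEnd ℂ) (v i l)))
          = ((N : ℂ) / (r : ℂ)) • (1 : Matrix (Fin r) (Fin r) ℂ),
        ∀ μ : ℂ, Module.End.HasEigenvalue (Matrix.toLin' X) μ →
          μ = 0 ∨ μ = (N : ℂ) / (r : ℂ),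
        ∑ i, ∑ j, ‖X i j‖ ^ 2 = (N : ℝ) ^ 2 / (r : ℝ) ] :=
  stmt_0_general N r hr v hunit X hX
end

section
/- (Welch bound) If v_1, ..., v_N ∈ C^r are unit vectors with N > r, then the maximum over i ≠ j of |⟨v_i, v_j⟩| is at least sqrt((N - r)/(r(N - 1))). -/
/-!
Let `A` be the `N × r` matrix with rows `v̄ᵢ`, so that `G = A Aᴴ` is the Gram matrix of the `vᵢ`
and `S = Aᴴ A` is the `r × r` frame operator. Since `trace (G Gᴴ) = trace (S Sᴴ)`, both have the same
Frobenius norm, and `trace S = trace G = N`. Cauchy–Schwarz on the diagonal of `S` gives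
`‖S‖_F² ≥ N² / r`, so the `N (N - 1)` off-diagonal entries of `G` have squared norms summing to at
least `N² / r - N`, and one of them is at least the average `(N - r) / (r (N - 1))`.
-/

open Finset Matrix RCLike

theorem Finset.sum_sum_eq_sum_add_sum_offDiag {ι M : Type*} [Fintype ι] [DecidableEq ι]
    [AddCommMonoid M] (f : ι → ι → M) :
    ∑ i, ∑ j, f i j = ∑ i, f i i + ∑ p ∈ univ.offDiag, f p.1 p.2 := by
  rw [← sum_diag univ (fun p => f p.1 p.2), ← sum_union (disjoint_diag_offDiag _),
    diag_union_offDiag, sum_product]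

namespace Matrix

variable {𝕜 : Type*} [RCLike 𝕜] {m n : Type*} [Fintype m] [Fintype n]

theorem sum_norm_sq_eq_re_trace_conjTranspose_mul_self (B : Matrix m n 𝕜) :
    ∑ i, ∑ j, ‖B i j‖ ^ 2 = re (Bᴴ * B).trace := by
  simp only [trace, diag, mul_apply, conjTranspose_apply, RCLike.star_def, RCLike.conj_mul,
    map_sum]
  rw [Finset.sum_comm]
  norm_cast

theorem sum_norm_sq_mul_conjTranspose_self (A : Matrix m n 𝕜) :
    ∑ i, ∑ j, ‖(A * Aᴴ) i j‖ ^ 2 = ∑ k, ∑ l, ‖(Aᴴ * A) k l‖ ^ 2 := by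
  simp only [sum_norm_sq_eq_re_trace_conjTranspose_mul_self, conjTranspose_mul,
    conjTranspose_conjTranspose, Matrix.mul_assoc]
  rw [trace_mul_comm, Matrix.mul_assoc, Matrix.mul_assoc]

theorem sq_re_trace_le_card_mul_sum_norm_sq (S : Matrix n n 𝕜) :
    re S.trace ^ 2 ≤ Fintype.card n * ∑ k, ∑ l, ‖S k l‖ ^ 2 :=
  calc re S.trace ^ 2 = (∑ k, re (S k k)) ^ 2 := by simp [trace]
  _ ≤ Fintype.card n * ∑ k, re (S k k) ^ 2 := sq_sum_le_card_mul_sum_sq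
  _ ≤ Fintype.card n * ∑ k, ∑ l, ‖S k l‖ ^ 2 := by
    gcongr with k
    calc re (S k k) ^ 2 ≤ ‖S k k‖ ^ 2 :=
          sq_le_sq' (neg_le_of_abs_le (abs_re_le_norm _)) (re_le_norm _)
      _ ≤ ∑ l, ‖S k l‖ ^ 2 :=
          single_le_sum (f := fun l => ‖S k l‖ ^ 2) (fun _ _ => by positivity) (mem_univ k)

theorem exists_ne_le_norm_sq_mul_conjTranspose_self (A : Matrix m n 𝕜)
    (hA : ∀ i, (A * Aᴴ) i i = 1) (hm : 2 ≤ Fintype.card m) (hn : 0 < Fintype.card n) :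
    ∃ i j, i ≠ j ∧ ((Fintype.card m : ℝ) - Fintype.card n) /
      (Fintype.card n * (Fintype.card m - 1)) ≤ ‖(A * Aᴴ) i j‖ ^ 2 := by
  classical
  have htrace : re (Aᴴ * A).trace = Fintype.card m := by
    rw [trace_mul_comm]
    simp [trace, hA]
  have hframe := sq_re_trace_le_card_mul_sum_norm_sq (Aᴴ * A)
  rw [htrace, ← sum_norm_sq_mul_conjTranspose_self, sum_sum_eq_sum_add_sum_offDiag] at hframe
  simp only [hA, norm_one, one_pow, sum_const, card_univ, nsmul_one] at hframe
  have hcard : (#(univ : Finset m).offDiag : ℝ) = Fintype.card m * (Fintype.card m - 1) := by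
    rw [offDiag_card, card_univ, Nat.cast_sub (Nat.le_mul_self _), Nat.cast_mul]
    ring
  have hm' : (2 : ℝ) ≤ Fintype.card m := by exact_mod_cast hm
  have hn' : (0 : ℝ) < Fintype.card n := by exact_mod_cast hn
  have hoff : ∑ _p ∈ (univ : Finset m).offDiag, ((Fintype.card m : ℝ) - Fintype.card n) /
      (Fintype.card n * (Fintype.card m - 1)) ≤ ∑ p ∈ univ.offDiag, ‖(A * Aᴴ) p.1 p.2‖ ^ 2 := by
    rw [sum_const, nsmul_eq_mul, hcard, mul_div_assoc', div_le_iff₀ (by nlinarith)]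
    nlinarith
  have hne : (univ : Finset m).offDiag.Nonempty := by
    obtain ⟨i, j, hij⟩ := Fintype.exists_pair_of_one_lt_card hm
    exact ⟨(i, j), mem_offDiag.2 ⟨mem_univ _, mem_univ _, hij⟩⟩
  obtain ⟨p, hp, hle⟩ := exists_le_of_sum_le hne hoff
  exact ⟨p.1, p.2, (mem_offDiag.1 hp).2.2, hle⟩

end Matrix

theorem stmt_1_general (N r : ℕ) (hr : 1 ≤ r) (hN : 2 ≤ N)
    (v : Fin N → Fin r → ℂ)
    (hunit : ∀ i, ∑ k, ‖v i k‖ ^ 2 = 1) :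
    ∃ i j : Fin N, i ≠ j ∧
      Real.sqrt (((N : ℝ) - (r : ℝ)) / ((r : ℝ) * ((N : ℝ) - 1)))
        ≤ ‖∑ k, (starRingEnd ℂ) (v i k) * v j k‖ := by
  let A : Matrix (Fin N) (Fin r) ℂ := .of fun i k => starRingEnd ℂ (v i k)
  have hA : ∀ i j, (A * Aᴴ) i j = ∑ k, starRingEnd ℂ (v i k) * v j k := by
    simp [A, mul_apply]
  have hdiag : ∀ i, (A * Aᴴ) i i = 1 := by
    intro i
    rw [hA]
    simp only [Complex.conj_mul']
    exact_mod_cast hunit i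
  obtain ⟨i, j, hij, hle⟩ := exists_ne_le_norm_sq_mul_conjTranspose_self A hdiag
    (by rwa [Fintype.card_fin]) (by rwa [Fintype.card_fin])
  refine ⟨i, j, hij, (Real.sqrt_le_left (norm_nonneg _)).2 ?_⟩
  simpa [hA] using hle

/-- Welch bound. -/
theorem stmt_1 (N r : ℕ) (hr : 1 ≤ r) (hN : 2 ≤ N) (hNr : r < N)
    (v : Fin N → Fin r → ℂ)
    (hunit : ∀ i, ∑ k, ‖v i k‖ ^ 2 = 1) :
    ∃ i j : Fin N, i ≠ j ∧
      Real.sqrt (((N : ℝ) - (r : ℝ)) / ((r : ℝ) * ((N : ℝ) - 1)))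
        ≤ ‖∑ k, (starRingEnd ℂ) (v i k) * v j k‖ :=
  stmt_1_general N r hr hN v hunit
end

section
/- Equality holds in the Welch bound if and only if the vectors form an equiangular tight frame: if v_1, ..., v_N ∈ C^r are unit vectors forming a tight frame (sum of v_i v_i^* = (N/r)·I) with |⟨v_i, v_j⟩| constant equal to α for all i ≠ j, then α = sqrt((N-r)/(r(N-1))). -/
open Matrix BigOperators

/-!
Let `W` be the synthesis matrix whose columns are the `v i`. The frame operator `W Wᴴ` and the
Gram matrix `Wᴴ W` have the same Frobenius norm, both squares being `tr (Wᴴ W Wᴴ W)`. Tightness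
makes the first one `N² / r`; equiangularity makes the second one `N + N (N - 1) α²`. Solving for
`α²` gives the Welch bound with equality.
-/

namespace Matrix

variable {ι m n 𝕜 : Type*} [Fintype ι] [Fintype m] [Fintype n] [RCLike 𝕜]

omit [Fintype n] in
theorem conjTranspose_mul_self_apply_self (A : Matrix m n 𝕜) (j : n) :
    (Aᴴ * A) j j = ((∑ i, ‖A i j‖ ^ 2 : ℝ) : 𝕜) := by
  simp [mul_apply, RCLike.conj_mul]

theorem trace_conjTranspose_mul_self (A : Matrix m n 𝕜) :
    (Aᴴ * A).trace = ((∑ i, ∑ j, ‖A i j‖ ^ 2 : ℝ) : 𝕜) := by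
  rw [Finset.sum_comm]
  simp [trace, conjTranspose_mul_self_apply_self]

theorem sum_norm_sq_conjTranspose_mul_self (A : Matrix m n 𝕜) :
    ∑ i, ∑ j, ‖(Aᴴ * A) i j‖ ^ 2 = ∑ i, ∑ j, ‖(A * Aᴴ) i j‖ ^ 2 := by
  apply RCLike.ofReal_injective (K := 𝕜)
  rw [← trace_conjTranspose_mul_self, ← trace_conjTranspose_mul_self]
  simp only [conjTranspose_mul, conjTranspose_conjTranspose]
  rw [Matrix.mul_assoc, trace_mul_comm]
  simp only [Matrix.mul_assoc]

theorem sum_norm_sq_smul_one [DecidableEq n] (c : 𝕜) :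
    ∑ i, ∑ j, ‖(c • (1 : Matrix n n 𝕜)) i j‖ ^ 2 = Fintype.card n * ‖c‖ ^ 2 := by
  simp [one_apply, apply_ite]

theorem sum_norm_sq_of_norm_apply_eq (A : Matrix ι ι 𝕜) {α : ℝ}
    (hdiag : ∀ i, ‖A i i‖ = 1) (hoff : ∀ i j, i ≠ j → ‖A i j‖ = α) :
    ∑ i, ∑ j, ‖A i j‖ ^ 2 = Fintype.card ι + Fintype.card ι * (Fintype.card ι - 1) * α ^ 2 := by
  classical
  have hrow : ∀ i, ∑ j, ‖A i j‖ ^ 2 = 1 + (Fintype.card ι - 1) * α ^ 2 := by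
    intro i
    rw [← Finset.add_sum_erase _ _ (Finset.mem_univ i), hdiag,
      Finset.sum_congr rfl fun j hj => by rw [hoff i j (Finset.ne_of_mem_erase hj).symm]]
    have : Nonempty ι := ⟨i⟩
    rw [Finset.sum_const, Finset.card_erase_of_mem (Finset.mem_univ i), Finset.card_univ,
      nsmul_eq_mul, Nat.cast_pred Fintype.card_pos, one_pow]
  simp only [hrow, Finset.sum_const, Finset.card_univ, nsmul_eq_mul]
  ring

end Matrix

theorem stmt_2_general (N r : ℕ) (hr : 1 ≤ r) (hN : 2 ≤ N)
    (v : Fin N → Fin r → ℂ)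
    (hunit : ∀ i, ∑ k, ‖v i k‖ ^ 2 = 1)
    (htight : (∑ i, Matrix.vecMulVec (v i) (fun l => (starRingEnd ℂ) (v i l)))
      = ((N : ℂ) / (r : ℂ)) • (1 : Matrix (Fin r) (Fin r) ℂ))
    (α : ℝ) (hα0 : 0 ≤ α)
    (heq : ∀ i j : Fin N, i ≠ j → ‖∑ k, (starRingEnd ℂ) (v i k) * v j k‖ = α) :
    α = Real.sqrt (((N : ℝ) - (r : ℝ)) / ((r : ℝ) * ((N : ℝ) - 1))) := by
  set W : Matrix (Fin r) (Fin N) ℂ := (of v)ᵀ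
  have hframe : W * Wᴴ = ((N : ℂ) / r) • 1 := by
    rw [← htight]
    ext k l
    simp [W, mul_apply, Matrix.sum_apply, vecMulVec_apply]
  have hgram : ∑ i, ∑ j, ‖(Wᴴ * W) i j‖ ^ 2 = N + N * (N - 1) * α ^ 2 := by
    simpa using sum_norm_sq_of_norm_apply_eq (Wᴴ * W)
      (fun i => by simp [conjTranspose_mul_self_apply_self, W, hunit])
      (fun i j hij => by simpa [W, mul_apply] using heq i j hij)
  have hfrob : (N : ℝ) + N * (N - 1) * α ^ 2 = r * ‖(N : ℂ) / r‖ ^ 2 := by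
    rw [← hgram, sum_norm_sq_conjTranspose_mul_self, hframe, sum_norm_sq_smul_one,
      Fintype.card_fin]
  have hr0 : (r : ℝ) ≠ 0 := Nat.cast_ne_zero.mpr (by omega)
  have hN1 : (N : ℝ) - 1 ≠ 0 := by
    have : (2 : ℝ) ≤ N := by exact_mod_cast hN
    linarith
  have hα2 : α ^ 2 = ((N : ℝ) - r) / (r * ((N : ℝ) - 1)) := by
    rw [norm_div, Complex.norm_natCast, Complex.norm_natCast] at hfrob
    field_simp at hfrob
    rw [eq_div_iff (mul_ne_zero hr0 hN1)]
    linear_combination hfrob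
  rw [← hα2, Real.sqrt_sq hα0]

/-- Equality in the Welch bound: an equiangular tight frame has coherence
    `sqrt((N-r)/(r(N-1)))`. -/
theorem stmt_2 (N r : ℕ) (hr : 1 ≤ r) (hN : 2 ≤ N) (hNr : r < N)
    (v : Fin N → Fin r → ℂ)
    (hunit : ∀ i, ∑ k, ‖v i k‖ ^ 2 = 1)
    (htight : (∑ i, Matrix.vecMulVec (v i) (fun l => (starRingEnd ℂ) (v i l)))
      = ((N : ℂ) / (r : ℂ)) • (1 : Matrix (Fin r) (Fin r) ℂ))
    (α : ℝ) (hα0 : 0 ≤ α) (hα1 : α ≤ 1)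
    (heq : ∀ i j : Fin N, i ≠ j → ‖∑ k, (starRingEnd ℂ) (v i k) * v j k‖ = α) :
    α = Real.sqrt (((N : ℝ) - (r : ℝ)) / ((r : ℝ) * ((N : ℝ) - 1))) :=
  stmt_2_general N r hr hN v hunit htight α hα0 heq
end

section
/- (Gerzon bound, complex case) If v_1, ..., v_N ∈ C^r are unit vectors with |⟨v_i, v_j⟩| = α for all i ≠ j, where 0 ≤ α < 1, then N ≤ r². -/
/-!
Send each unit vector `u ∈ 𝕜^r` to the vectorisation of the rank-one projector `u u*`, a vector of
`𝕜^(r × r)`. Inner products become `⟪u u*, w w*⟫ = |⟪u, w⟫|²`, so the images of the `v i` have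
Gram matrix `(1 - α²) I + α² J`, which is positive definite for `α < 1`. Hence they are linearly
independent in a space of dimension `r²`.
-/

open Matrix
open scoped ComplexOrder InnerProductSpace

theorem linearIndependent_of_inner_eq {𝕜 E ι : Type*} [RCLike 𝕜] [NormedAddCommGroup E]
    [InnerProductSpace 𝕜 E] [Fintype ι] {w : ι → E} {β : ℝ} (hβ0 : 0 ≤ β) (hβ1 : β < 1)
    (hw_self : ∀ i, ⟪w i, w i⟫_𝕜 = 1) (hw_ne : ∀ i j, i ≠ j → ⟪w i, w j⟫_𝕜 = β) :
    LinearIndependent 𝕜 w := by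
  classical
  have hgram : gram 𝕜 w = (1 - β) • (1 : Matrix ι ι 𝕜) + β • vecMulVec 1 (star 1) := by
    ext i j
    by_cases h : i = j
    · subst h; rw [gram_apply, hw_self]; simp [RCLike.real_smul_eq_coe_mul]
    · rw [gram_apply, hw_ne i j h]; simp [h, RCLike.real_smul_eq_coe_mul]
  refine linearIndependent_of_posDef_gram ?_
  rw [hgram]
  exact (PosDef.one.smul (sub_pos.2 hβ1)).add_posSemidef
    ((posSemidef_vecMulVec_self_star 1).smul hβ0)

section SelfOuter

variable {𝕜 κ : Type*} [RCLike 𝕜] [Fintype κ]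

noncomputable def selfOuter (u : EuclideanSpace 𝕜 κ) : EuclideanSpace 𝕜 (κ × κ) :=
  WithLp.toLp 2 fun p => starRingEnd 𝕜 (u p.1) * u p.2

theorem inner_selfOuter (u w : EuclideanSpace 𝕜 κ) :
    ⟪selfOuter u, selfOuter w⟫_𝕜 = (‖⟪u, w⟫_𝕜‖ ^ 2 : ℝ) := by
  rw [RCLike.ofReal_pow, ← RCLike.conj_mul]
  simp only [PiLp.inner_apply]
  rw [map_sum, Finset.sum_mul_sum, Fintype.sum_prod_type]
  simp only [selfOuter, RCLike.inner_apply, map_mul, RCLike.conj_conj]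
  refine Finset.sum_congr rfl fun k _ => Finset.sum_congr rfl fun l _ => ?_
  ring

end SelfOuter

theorem card_le_card_sq_of_equiangular {𝕜 ι κ : Type*} [RCLike 𝕜] [Fintype ι] [Fintype κ]
    {v : ι → EuclideanSpace 𝕜 κ} {α : ℝ} (hα0 : 0 ≤ α) (hα1 : α < 1) (hv : ∀ i, ‖v i‖ = 1)
    (hvv : ∀ i j, i ≠ j → ‖⟪v i, v j⟫_𝕜‖ = α) :
    Fintype.card ι ≤ Fintype.card κ ^ 2 := by
  have hli : LinearIndependent 𝕜 fun i => selfOuter (v i) :=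
    linearIndependent_of_inner_eq (β := α ^ 2) (sq_nonneg α) (by nlinarith)
      (fun i => by rw [inner_selfOuter, inner_self_eq_norm_sq_to_K, hv]; simp)
      (fun i j hij => by simp [inner_selfOuter, hvv i j hij])
  simpa [finrank_euclideanSpace, sq] using hli.fintype_card_le_finrank

/-- Gerzon bound, complex case. -/
theorem stmt_3 (N r : ℕ) (v : Fin N → Fin r → ℂ)
    (hunit : ∀ i, ∑ k, ‖v i k‖ ^ 2 = 1)
    (α : ℝ) (hα0 : 0 ≤ α) (hα1 : α < 1)
    (heq : ∀ i j : Fin N, i ≠ j → ‖∑ k, (starRingEnd ℂ) (v i k) * v j k‖ = α) :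
    N ≤ r ^ 2 := by
  have hinner (i j : Fin N) : ⟪WithLp.toLp 2 (v i), WithLp.toLp 2 (v j)⟫_ℂ =
      ∑ k, (starRingEnd ℂ) (v i k) * v j k := by
    simp [PiLp.inner_apply, mul_comm]
  have hnorm (i : Fin N) : ‖WithLp.toLp 2 (v i)‖ = 1 := by
    rw [← pow_eq_one_iff_of_nonneg (norm_nonneg _) two_ne_zero, EuclideanSpace.norm_sq_eq]
    exact hunit i
  simpa using card_le_card_sq_of_equiangular (v := fun i => WithLp.toLp 2 (v i)) hα0 hα1 hnorm
    fun i j hij => by rw [hinner]; exact heq i j hij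
end

section
/- (Gerzon bound, real case) If v_1, ..., v_N ∈ R^r are unit vectors with |⟨v_i, v_j⟩| = α for all i ≠ j, where 0 ≤ α < 1, then N ≤ r(r+1)/2. -/
/-!
The rank-one matrices `v i (v i)ᵀ` lie in the space of symmetric `r × r` matrices, of dimension
`r (r + 1) / 2`. Evaluating a vanishing combination `∑ c i • v i (v i)ᵀ` as a quadratic form at
`v j` gives `∑ c i ⟪v i, v j⟫² = 0` for every `j`, and `⟪v i, v j⟫² = (1 - α²) δᵢⱼ + α²` is a
nonsingular matrix because `0 ≤ α² < 1`. So these matrices are linearly independent.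
-/

open Finset Matrix

section OuterSquare

variable {ι R : Type*} [CommSemiring R]

/-- The symmetric matrix `x xᵀ`, recorded by its entries on unordered pairs of indices. -/
def outerSq (x : ι → R) : Sym2 ι → R :=
  Sym2.lift ⟨fun k l => x k * x l, fun _ _ => mul_comm _ _⟩

@[simp]
lemma outerSq_mk (x : ι → R) (k l : ι) : outerSq x s(k, l) = x k * x l := rfl

variable [Fintype ι]

def quadPairing (y : ι → R) : (Sym2 ι → R) →ₗ[R] R :=
  ∑ k, ∑ l, (y k * y l) • LinearMap.proj s(k, l)

lemma quadPairing_apply (y : ι → R) (F : Sym2 ι → R) :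
    quadPairing y F = ∑ k, ∑ l, y k * y l * F s(k, l) := by
  simp [quadPairing, LinearMap.sum_apply]

lemma quadPairing_outerSq (x y : ι → R) : quadPairing y (outerSq x) = (x ⬝ᵥ y) ^ 2 := by
  simp only [quadPairing_apply, outerSq_mk, dotProduct, sq, sum_mul_sum]
  exact sum_congr rfl fun k _ => sum_congr rfl fun l _ => by ring

lemma finrank_sym2_fun [DecidableEq ι] (K : Type*) [Field K] :
    Module.finrank K (Sym2 ι → K) = Fintype.card ι * (Fintype.card ι + 1) / 2 := by
  rw [Module.finrank_fintype_fun_eq_card, Sym2.card, Nat.choose_two_right, Nat.add_sub_cancel,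
    mul_comm]

end OuterSquare

section Equiangular

variable {K ι : Type*} [Field K] [LinearOrder K] [IsStrictOrderedRing K] [Fintype ι]

lemma eq_zero_of_sum_mul_ite_eq_zero [DecidableEq ι] {β : K} (hβ0 : 0 ≤ β) (hβ1 : β < 1)
    {c : ι → K} (hc : ∀ j, ∑ i, c i * (if i = j then 1 else β) = 0) : c = 0 := by
  have hrow : ∀ j, β * ∑ i, c i + (1 - β) * c j = 0 := fun j => by
    have hsplit : ∀ i, c i * (if i = j then 1 else β)
        = β * c i + (1 - β) * (if i = j then c i else 0) := fun i => by
      split_ifs <;> ring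
    rw [← hc j, Fintype.sum_congr _ _ hsplit, sum_add_distrib, ← mul_sum, ← mul_sum,
      Fintype.sum_ite_eq']
  have htotal : (Fintype.card ι * β + (1 - β)) * ∑ i, c i = 0 := by
    have := sum_congr rfl fun j (_ : j ∈ univ) => hrow j
    rw [sum_add_distrib, ← mul_sum, ← mul_sum, sum_const, card_univ, nsmul_eq_mul,
      sum_const_zero] at this
    linear_combination this
  have hsum : ∑ i, c i = 0 := (mul_eq_zero.mp htotal).resolve_left (by positivity)
  funext j
  have := hrow j
  rw [hsum, mul_zero, zero_add] at this
  exact (mul_eq_zero.mp this).resolve_left (sub_ne_zero.mpr hβ1.ne')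

lemma linearIndependent_outerSq_of_equiangular {n : Type*} [Fintype n] {v : ι → n → K} {α : K}
    (hα0 : 0 ≤ α) (hα1 : α < 1) (hunit : ∀ i, v i ⬝ᵥ v i = 1)
    (heq : ∀ i j, i ≠ j → |v i ⬝ᵥ v j| = α) :
    LinearIndependent K (fun i => outerSq (v i)) := by
  classical
  rw [Fintype.linearIndependent_iff]
  intro c hc
  have hgram : ∀ i j, (v i ⬝ᵥ v j) ^ 2 = if i = j then 1 else α ^ 2 := fun i j => by
    split_ifs with h
    · rw [h, hunit, one_pow]
    · rw [← sq_abs, heq i j h]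
  refine congrFun (eq_zero_of_sum_mul_ite_eq_zero (sq_nonneg α) (by nlinarith) fun j => ?_)
  simpa [hgram, quadPairing_outerSq] using congrArg (quadPairing (v j)) hc

end Equiangular

/-- Gerzon bound, real case. -/
theorem stmt_4 (N r : ℕ) (v : Fin N → Fin r → ℝ)
    (hunit : ∀ i, ∑ k, (v i k) ^ 2 = 1)
    (α : ℝ) (hα0 : 0 ≤ α) (hα1 : α < 1)
    (heq : ∀ i j : Fin N, i ≠ j → |∑ k, v i k * v j k| = α) :
    N ≤ r * (r + 1) / 2 := by
  have hunit' : ∀ i, v i ⬝ᵥ v i = 1 := fun i => by simpa [dotProduct, sq] using hunit i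
  have hli := linearIndependent_outerSq_of_equiangular hα0 hα1 hunit' heq
  have := hli.fintype_card_le_finrank
  rwa [finrank_sym2_fun, Fintype.card_fin, Fintype.card_fin] at this
end

section
/- If v_1, ..., v_N ∈ C^r are unit vectors with |⟨v_i, v_j⟩| = α for all i ≠ j and 0 ≤ α < 1, then the rank-one projections v_1 v_1^*, ..., v_N v_N^* are linearly independent (over R) in the real vector space of r×r Hermitian matrices. -/
open Matrix BigOperators

/-- The rank-one projections of an equiangular system with coherence `α < 1`
    are linearly independent over `ℝ`. -/
theorem stmt_5 (N r : ℕ) (v : Fin N → Fin r → ℂ)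
    (hunit : ∀ i, ∑ k, ‖v i k‖ ^ 2 = 1)
    (α : ℝ) (hα0 : 0 ≤ α) (hα1 : α < 1)
    (heq : ∀ i j : Fin N, i ≠ j → ‖∑ k, (starRingEnd ℂ) (v i k) * v j k‖ = α) :
    LinearIndependent ℝ
      (fun i : Fin N => Matrix.vecMulVec (v i) (fun l => (starRingEnd ℂ) (v i l))) := by
  rw [Fintype.linearIndependent_iff]
  intro g hg j0
  set s : Fin N → Fin N → ℂ := fun i j => ∑ k, (starRingEnd ℂ) (v i k) * v j k with hs
  have hsd : ∀ i, s i i = 1 := by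
    intro i
    have : s i i = ((∑ k, ‖v i k‖ ^ 2 : ℝ) : ℂ) := by
      push_cast [hs]
      apply Finset.sum_congr rfl
      intro k _
      rw [mul_comm, Complex.mul_conj']
    rw [this, hunit i, Complex.ofReal_one]
  -- entrywise equation
  have h1 : ∀ k l, ∑ i, (g i : ℂ) * (v i k * (starRingEnd ℂ) (v i l)) = 0 := by
    intro k l
    have := congrFun (congrFun hg k) l
    simpa [Matrix.sum_apply, Matrix.vecMulVec_apply, Complex.real_smul] using this
  -- sandwich with v j
  have hE : ∀ j, ∑ i, (g i : ℂ) * ((starRingEnd ℂ) (s i j) * s i j) = 0 := by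
    intro j
    have expand : ∀ i, (g i : ℂ) * ((starRingEnd ℂ) (s i j) * s i j)
        = ∑ k, ∑ l, ((g i : ℂ) * (v i k * (starRingEnd ℂ) (v i l)))
            * ((starRingEnd ℂ) (v j k) * v j l) := by
      intro i
      simp only [hs, map_sum, _root_.map_mul, Complex.conj_conj, Finset.sum_mul,
        Finset.mul_sum]
      rw [Finset.sum_comm]
      refine Finset.sum_congr rfl fun k _ => ?_
      refine Finset.sum_congr rfl fun l _ => ?_
      ring
    calc ∑ i, (g i : ℂ) * ((starRingEnd ℂ) (s i j) * s i j)
        = ∑ k, ∑ l, (∑ i, (g i : ℂ) * (v i k * (starRingEnd ℂ) (v i l)))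
            * ((starRingEnd ℂ) (v j k) * v j l) := by
          simp only [expand]
          rw [Finset.sum_comm]
          refine Finset.sum_congr rfl fun k _ => ?_
          rw [Finset.sum_comm]
          simp [Finset.sum_mul]
      _ = 0 := by simp [h1]
  -- real version
  have hR : ∀ j, ∑ i, g i * ‖s i j‖ ^ 2 = 0 := by
    intro j
    have h2 : ∑ i, (g i : ℂ) * ((starRingEnd ℂ) (s i j) * s i j)
        = ((∑ i, g i * ‖s i j‖ ^ 2 : ℝ) : ℂ) := by
      push_cast
      refine Finset.sum_congr rfl fun i _ => ?_
      simp [Complex.conj_mul']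
    have hEj := hE j
    rw [h2] at hEj
    exact_mod_cast hEj
  set S : ℝ := ∑ i, g i with hS
  have hsplit : ∀ j, g j + α ^ 2 * (S - g j) = 0 := by
    intro j
    have h3 := hR j
    rw [← Finset.add_sum_erase _ _ (Finset.mem_univ j), hsd j] at h3
    have hcg : ∀ i ∈ Finset.univ.erase j, g i * ‖s i j‖ ^ 2 = α ^ 2 * g i := by
      intro i hi
      have hne : i ≠ j := Finset.ne_of_mem_erase hi
      have : ‖s i j‖ = α := heq i j hne
      rw [this]; ring
    rw [Finset.sum_congr rfl hcg, ← Finset.mul_sum,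
      Finset.sum_erase_eq_sub (Finset.mem_univ j), ← hS] at h3
    simpa using h3
  have hN : (1 : ℝ) ≤ (N : ℝ) := by exact_mod_cast j0.pos
  have hsum : S + α ^ 2 * ((N : ℝ) * S - S) = 0 := by
    have h5 : ∑ j, (g j + α ^ 2 * (S - g j)) = 0 := by simp [hsplit]
    rw [Finset.sum_add_distrib, ← Finset.mul_sum, Finset.sum_sub_distrib] at h5
    simpa [← hS, Finset.sum_const, nsmul_eq_mul] using h5
  have factor : S * (1 + α ^ 2 * ((N : ℝ) - 1)) = 0 := by linear_combination hsum
  have hpos : 0 < 1 + α ^ 2 * ((N : ℝ) - 1) := by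
    have := mul_nonneg (sq_nonneg α) (by linarith : (0 : ℝ) ≤ (N : ℝ) - 1)
    linarith
  have hS0 : S = 0 := by
    rcases mul_eq_zero.mp factor with h | h
    · exact h
    · exact absurd h (ne_of_gt hpos)
  have hfin := hsplit j0
  rw [hS0] at hfin
  have h6 : g j0 * (1 - α ^ 2) = 0 := by linarith
  have h7 : (1 : ℝ) - α ^ 2 ≠ 0 := by nlinarith
  rcases mul_eq_zero.mp h6 with h | h
  · exact h
  · exact absurd h h7
end

section
/- Let v_1, ..., v_N ∈ C^r form an ETF and define the r×r real matrix R with entries R_{kℓ} = ∑_{i=1}^N |(v_i)_k|²|(v_i)_ℓ|². Then R ⪯ ((1 - 1/r)/(1 - 1/N))·I_r + ((N/r - 1)/(r(1 - 1/N)))·J_r in the Loewner order, where J_r is the all-ones matrix. -/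
/-!
Put `p i k = ‖v i k‖²`, so that `R = ∑ᵢ pᵢ pᵢᵀ`, every `pᵢ` sums to `1` and every column of `p`
sums to `N / r`. Writing `x = y + t • 1` with `∑ y = 0`, the quadratic form of the claimed matrix
at `x` splits into a part in `t`, which vanishes identically, and the inequality
`∑ᵢ ⟪pᵢ, y⟫² ≤ (1 - μ²) ‖y‖²`, `μ²` the Welch bound. For the latter put `cᵢ = ⟪pᵢ, y⟫`, which
sum to `0`: then `∑ cᵢ² = ⟪y, b⟫`, where `b` is the diagonal of `B = ∑ cᵢ vᵢ vᵢ*`. The diagonal is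
bounded by the Frobenius norm, and equiangularity gives
`‖B‖_F² = ∑ cᵢ cⱼ |⟪vᵢ, vⱼ⟫|² = (1 - μ²) ∑ cᵢ² + μ² (∑ cᵢ)² = (1 - μ²) ∑ cᵢ²`,
so Cauchy–Schwarz yields `(∑ cᵢ²)² ≤ ‖y‖² (1 - μ²) ∑ cᵢ²`.
-/

open Matrix BigOperators ComplexConjugate Finset

section
variable {ι n : Type*} [Fintype ι] [Fintype n]

lemma sum_sum_mul_mul_eq_of_offDiag_eq (G : ι → ι → ℝ) {m : ℝ} (hdiag : ∀ i, G i i = 1)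
    (hoff : ∀ i j, i ≠ j → G i j = m) (c : ι → ℝ) :
    ∑ i, ∑ j, c i * c j * G i j = (1 - m) * ∑ i, c i ^ 2 + m * (∑ i, c i) ^ 2 := by
  classical
  have hG : ∀ i j, G i j = m + if i = j then 1 - m else 0 := by
    intro i j
    split_ifs with h
    · subst h; rw [hdiag]; ring
    · rw [hoff i j h, add_zero]
  simp only [hG, mul_add, mul_ite, mul_zero, sum_add_distrib, sum_ite_eq, mem_univ, if_true,
    sq, mul_sum, sum_mul]
  rw [add_comm]
  congr 1 <;> refine sum_congr rfl fun i _ => ?_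
  · ring
  · exact sum_congr rfl fun j _ => by ring

lemma sum_norm_sq_diag_le {E : Type*} [SeminormedAddGroup E] (M : n → n → E) :
    ∑ k, ‖M k k‖ ^ 2 ≤ ∑ k, ∑ l, ‖M k l‖ ^ 2 :=
  sum_le_sum fun k _ =>
    single_le_sum (f := fun l => ‖M k l‖ ^ 2) (fun _ _ => by positivity) (mem_univ k)

lemma sum_sum_norm_sq_sum_smul_outer (c : ι → ℝ) (w : ι → n → ℂ) :
    ∑ k, ∑ l, ‖∑ i, (c i : ℂ) * (conj (w i k) * w i l)‖ ^ 2
      = ∑ i, ∑ j, c i * c j * ‖∑ k, conj (w i k) * w j k‖ ^ 2 := by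
  apply Complex.ofReal_injective
  push_cast
  simp only [← Complex.mul_conj', map_sum, map_mul, Complex.conj_conj, Complex.conj_ofReal]
  simp only [sum_mul_sum]
  simp only [mul_sum, ← Fintype.sum_prod_type']
  exact Fintype.sum_equiv ((Equiv.prodAssoc _ _ _).symm.trans
    ((Equiv.prodComm _ _).trans (Equiv.prodAssoc _ _ _))) _ _ fun _ => by
      simp only [Equiv.trans_apply, Equiv.prodAssoc_symm_apply, Equiv.prodComm_apply,
        Prod.swap_prod_mk, Equiv.prodAssoc_apply]
      ring

lemma sum_mul_le_of_sum_sq_le (y b : n → ℝ) {a : ℝ} (ha : 0 ≤ a)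
    (h : ∑ k, b k ^ 2 ≤ a * ∑ k, y k * b k) :
    ∑ k, y k * b k ≤ a * ∑ k, y k ^ 2 := by
  have hCS := sum_mul_sq_le_sq_mul_sq univ y b
  have hy : 0 ≤ ∑ k, y k ^ 2 := by positivity
  rcases le_or_gt (∑ k, y k * b k) 0 with hS | hS
  · exact hS.trans (by positivity)
  · nlinarith [mul_le_mul_of_nonneg_left h hy]

lemma dotProduct_mulVec_of_sum_mul (p : ι → n → ℝ) (x : n → ℝ) :
    x ⬝ᵥ (of fun k l => ∑ i, p i k * p i l) *ᵥ x = ∑ i, (∑ k, x k * p i k) ^ 2 := by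
  simp only [dotProduct, mulVec, of_apply, sq, sum_mul, mul_sum]
  refine ((sum_congr rfl fun k _ => sum_comm).trans sum_comm).trans ?_
  exact sum_congr rfl fun i _ => sum_congr rfl fun k _ => sum_congr rfl fun l _ => by ring

lemma dotProduct_mulVec_of_const_one (x : n → ℝ) :
    x ⬝ᵥ (of fun _ _ => (1 : ℝ)) *ᵥ x = (∑ k, x k) ^ 2 := by
  rw [sq, sum_mul_sum]
  simp [dotProduct, mulVec, mul_sum]

lemma posSemidef_smul_one_add_smul_ones_sub_of_stochastic [DecidableEq n] [Nonempty n]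
    (p : ι → n → ℝ) {a b s : ℝ}
    (hrow : ∀ i, ∑ k, p i k = 1) (hcol : ∀ k, ∑ i, p i k = s)
    (hperp : ∀ y : n → ℝ, ∑ k, y k = 0 → ∑ i, (∑ k, y k * p i k) ^ 2 ≤ a * ∑ k, y k ^ 2)
    (hab : (Fintype.card ι : ℝ) ≤ a * Fintype.card n + b * Fintype.card n ^ 2) :
    (a • (1 : Matrix n n ℝ) + b • of (fun _ _ => (1 : ℝ))
      - of fun k l => ∑ i, p i k * p i l).PosSemidef := by
  rw [posSemidef_iff_dotProduct_mulVec]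
  refine ⟨IsHermitian.ext fun k l => by simp [one_apply, eq_comm, mul_comm], fun x => ?_⟩
  simp only [star_trivial, sub_mulVec, add_mulVec, smul_mulVec, one_mulVec, dotProduct_sub,
    dotProduct_add, dotProduct_smul, smul_eq_mul, dotProduct_mulVec_of_sum_mul,
    dotProduct_mulVec_of_const_one]
  set t := (∑ k, x k) / Fintype.card n
  set y : n → ℝ := fun k => x k - t
  have hcard : (Fintype.card n : ℝ) ≠ 0 := by positivity
  have hsum : ∑ k, x k = Fintype.card n * t := (mul_div_cancel₀ _ hcard).symm
  have hy : ∑ k, y k = 0 := by simp [y, sum_sub_distrib, hsum]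
  have hxx : x ⬝ᵥ x = ∑ k, y k ^ 2 + Fintype.card n * t ^ 2 := by
    simp only [dotProduct, ← sq, y, sub_sq, sum_add_distrib, sum_sub_distrib, ← sum_mul,
      ← mul_sum, hsum, sum_const, card_univ, nsmul_eq_mul]
    ring
  have hyp : ∑ i, ∑ k, y k * p i k = 0 := by
    rw [sum_comm]
    simp only [← mul_sum, hcol, ← sum_mul, hy, zero_mul]
  have hx : ∀ i, ∑ k, x k * p i k = ∑ k, y k * p i k + t := fun i => by
    simp only [y, sub_mul, sum_sub_distrib, ← mul_sum, hrow, mul_one, sub_add_cancel]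
  have hxp : ∑ i, (∑ k, x k * p i k) ^ 2
      = ∑ i, (∑ k, y k * p i k) ^ 2 + Fintype.card ι * t ^ 2 := by
    simp only [hx, add_sq, sum_add_distrib, ← sum_mul, ← mul_sum, hyp, sum_const, card_univ,
      nsmul_eq_mul]
    ring
  rw [hxx, hsum, hxp]
  nlinarith [hperp y hy, mul_le_mul_of_nonneg_right hab (sq_nonneg t)]

omit [Fintype n] in
lemma sum_vecMulVec_conj_apply_self (v : ι → n → ℂ) (k : n) :
    (∑ i, vecMulVec (v i) (fun l => conj (v i l))) k k = ((∑ i, ‖v i k‖ ^ 2 : ℝ) : ℂ) := by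
  simp only [Matrix.sum_apply, vecMulVec_apply, Complex.mul_conj']
  push_cast
  rfl

lemma sum_sq_sum_mul_norm_sq_le_of_equiangular (v : ι → n → ℂ) {s m : ℝ} (hm : m ≤ 1)
    (hunit : ∀ i, ∑ k, ‖v i k‖ ^ 2 = 1) (hcol : ∀ k, ∑ i, ‖v i k‖ ^ 2 = s)
    (hoff : ∀ i j, i ≠ j → ‖∑ k, conj (v i k) * v j k‖ ^ 2 = m)
    (y : n → ℝ) (hy : ∑ k, y k = 0) :
    ∑ i, (∑ k, y k * ‖v i k‖ ^ 2) ^ 2 ≤ (1 - m) * ∑ k, y k ^ 2 := by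
  set c : ι → ℝ := fun i => ∑ k, y k * ‖v i k‖ ^ 2
  set b : n → ℝ := fun k => ∑ i, c i * ‖v i k‖ ^ 2
  have hc : ∑ i, c i = 0 := by
    rw [sum_comm]
    simp only [← mul_sum, hcol, ← sum_mul, hy, zero_mul]
  have hcc : ∑ i, c i ^ 2 = ∑ k, y k * b k := by
    simp only [b, mul_sum]
    rw [sum_comm]
    refine sum_congr rfl fun i _ => ?_
    rw [sq]
    change c i * ∑ k, y k * ‖v i k‖ ^ 2 = _
    exact mul_sum .. |>.trans (sum_congr rfl fun k _ => by ring)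
  have hgram_diag : ∀ i, ‖∑ k, conj (v i k) * v i k‖ ^ 2 = 1 := fun i => by
    simp only [Complex.conj_mul']
    norm_cast
    rw [hunit i, norm_one, one_pow]
  have hb : ∑ k, b k ^ 2 ≤ (1 - m) * ∑ i, c i ^ 2 := calc
    ∑ k, b k ^ 2 = ∑ k, ‖∑ i, (c i : ℂ) * (conj (v i k) * v i k)‖ ^ 2 := by
      refine sum_congr rfl fun k _ => ?_
      have : ∑ i, (c i : ℂ) * (conj (v i k) * v i k) = (b k : ℂ) := by
        simp [b, Complex.conj_mul']
      rw [this, Complex.norm_real, Real.norm_eq_abs, sq_abs]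
    _ ≤ ∑ k, ∑ l, ‖∑ i, (c i : ℂ) * (conj (v i k) * v i l)‖ ^ 2 :=
      sum_norm_sq_diag_le fun k l => ∑ i, (c i : ℂ) * (conj (v i k) * v i l)
    _ = ∑ i, ∑ j, c i * c j * ‖∑ k, conj (v i k) * v j k‖ ^ 2 :=
      sum_sum_norm_sq_sum_smul_outer c v
    _ = (1 - m) * ∑ i, c i ^ 2 := by
      rw [sum_sum_mul_mul_eq_of_offDiag_eq _ hgram_diag hoff, hc]
      ring
  rw [hcc] at hb ⊢
  exact sum_mul_le_of_sum_sq_le y b (sub_nonneg.2 hm) hb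

end

/-- The Welch lower bound on the squared coherence of `N` unit vectors in dimension `r`; it is
attained exactly by equiangular tight frames. -/
noncomputable def welchBound (N r : ℝ) : ℝ := (N - r) / (r * (N - 1))

section
variable {N r : ℝ} (hr : 1 ≤ r) (hrN : r < N)
include hr hrN

lemma welchBound_nonneg : 0 ≤ welchBound N r :=
  div_nonneg (by linarith) (mul_nonneg (by linarith) (by linarith))

lemma welchBound_le_one : welchBound N r ≤ 1 := by
  rw [welchBound, div_le_one (mul_pos (by linarith) (by linarith))]
  nlinarith

lemma one_sub_welchBound_eq : (1 - 1 / r) / (1 - 1 / N) = 1 - welchBound N r := by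
  have hN : N - 1 ≠ 0 := by linarith
  have hr0 : r ≠ 0 := by linarith
  have hN0 : N ≠ 0 := by linarith
  rw [welchBound]
  field_simp
  ring

lemma eq_coeffs_mul_add_mul_sq :
    N = (1 - 1 / r) / (1 - 1 / N) * r + (N / r - 1) / (r * (1 - 1 / N)) * r ^ 2 := by
  have hN : N - 1 ≠ 0 := by linarith
  have hr0 : r ≠ 0 := by linarith
  have hN0 : N ≠ 0 := by linarith
  field_simp
  ring

end

theorem stmt_10_general (N r : ℕ) (hNr : r < N)
    (v : Fin N → Fin r → ℂ)
    (hunit : ∀ i, ∑ k, ‖v i k‖ ^ 2 = 1)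
    (htight : (∑ i, Matrix.vecMulVec (v i) (fun l => (starRingEnd ℂ) (v i l)))
      = ((N : ℂ) / (r : ℂ)) • (1 : Matrix (Fin r) (Fin r) ℂ))
    (heq : ∀ i j : Fin N, i ≠ j →
      ‖∑ k, (starRingEnd ℂ) (v i k) * v j k‖
        = Real.sqrt (((N : ℝ) - (r : ℝ)) / ((r : ℝ) * ((N : ℝ) - 1))))
    (R : Matrix (Fin r) (Fin r) ℝ)
    (hR : R = Matrix.of fun k l => ∑ i, ‖v i k‖ ^ 2 * ‖v i l‖ ^ 2) :
    (((1 - 1 / (r : ℝ)) / (1 - 1 / (N : ℝ))) • (1 : Matrix (Fin r) (Fin r) ℝ)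
      + (((N : ℝ) / (r : ℝ) - 1) / ((r : ℝ) * (1 - 1 / (N : ℝ)))) •
          Matrix.of (fun _ _ => (1 : ℝ))
      - R).PosSemidef := by
  have hr : 0 < r := Nat.pos_of_ne_zero fun hr0 => by
    subst hr0
    simpa using hunit ⟨0, hNr⟩
  have : Nonempty (Fin r) := ⟨⟨0, hr⟩⟩
  have hr1 : (1 : ℝ) ≤ r := by exact_mod_cast hr
  have hrN : (r : ℝ) < N := by exact_mod_cast hNr
  have hcol : ∀ k, ∑ i, ‖v i k‖ ^ 2 = N / r := fun k => by
    refine Complex.ofReal_injective ?_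
    rw [← sum_vecMulVec_conj_apply_self, htight]
    simp
  subst hR
  refine posSemidef_smul_one_add_smul_ones_sub_of_stochastic (fun i k => ‖v i k‖ ^ 2) hunit hcol
    (fun y hy => ?_) ?_
  · rw [one_sub_welchBound_eq hr1 hrN]
    refine sum_sq_sum_mul_norm_sq_le_of_equiangular v (welchBound_le_one hr1 hrN) hunit hcol
      (fun i j hij => ?_) y hy
    rw [heq i j hij]
    exact Real.sq_sqrt (welchBound_nonneg hr1 hrN)
  · simp only [Fintype.card_fin]
    exact (eq_coeffs_mul_add_mul_sq hr1 hrN).le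

/-- The main ETF matrix inequality (Theorem 3.1 of the paper):
    `R ⪯ ((1-1/r)/(1-1/N)) I + ((N/r-1)/(r(1-1/N))) J`. -/
theorem stmt_10 (N r : ℕ) (hr : 2 ≤ r) (hNr : r < N)
    (v : Fin N → Fin r → ℂ)
    (hunit : ∀ i, ∑ k, ‖v i k‖ ^ 2 = 1)
    (htight : (∑ i, Matrix.vecMulVec (v i) (fun l => (starRingEnd ℂ) (v i l)))
      = ((N : ℂ) / (r : ℂ)) • (1 : Matrix (Fin r) (Fin r) ℂ))
    (heq : ∀ i j : Fin N, i ≠ j →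
      ‖∑ k, (starRingEnd ℂ) (v i k) * v j k‖
        = Real.sqrt (((N : ℝ) - (r : ℝ)) / ((r : ℝ) * ((N : ℝ) - 1))))
    (R : Matrix (Fin r) (Fin r) ℝ)
    (hR : R = Matrix.of fun k l => ∑ i, ‖v i k‖ ^ 2 * ‖v i l‖ ^ 2) :
    (((1 - 1 / (r : ℝ)) / (1 - 1 / (N : ℝ))) • (1 : Matrix (Fin r) (Fin r) ℝ)
      + (((N : ℝ) / (r : ℝ) - 1) / ((r : ℝ) * (1 - 1 / (N : ℝ)))) •
          Matrix.of (fun _ _ => (1 : ℝ))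
      - R).PosSemidef :=
  stmt_10_general N r hNr v hunit htight heq R hR
end

section
/- If v_1, ..., v_N ∈ C^r form an ETF and y ∈ C^r is a unit vector, then ∑_{i=1}^N |⟨y, v_i⟩|⁴ ≤ (N/r + r - 2)/(r(1 - 1/N)). -/
/-!
Flatten the rank-one projections `vᵢ vᵢ*` and `y y*` to vectors `Vᵢ`, `P` of the real Hilbert space
of `r × r` matrices with the Frobenius inner product `re tr (Aᴴ B)`. The `Vᵢ` are unit vectors with
constant pairwise inner product `β = α²`, tightness reads `∑ Vᵢ = (N/r) I`, and
`cᵢ = |⟨y, vᵢ⟩|² = ⟨Vᵢ, P⟩`. The deviations `dᵢ = cᵢ - 1/r` sum to zero, so `D = ∑ dᵢ Vᵢ` has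
`‖D‖² = (1 - β) ∑ dᵢ²`, while `⟨D, P - I/r⟩ = ∑ dᵢ²` and `‖P - I/r‖² = 1 - 1/r`; Cauchy–Schwarz
gives `∑ dᵢ² ≤ (1 - β)(1 - 1/r)`. Finally `∑ cᵢ² = ∑ dᵢ² + N/r²`, and pairing `∑ Vᵢ` with one `Vⱼ`
gives `1 + (N - 1) β = N/r`.
-/

open Matrix BigOperators

open scoped InnerProductSpace RealInnerProductSpace

section Equiangular

variable {ι F : Type*} [Fintype ι] [NormedAddCommGroup F] [InnerProductSpace ℝ F]

lemma norm_sq_sum_smul_of_equiangular {V : ι → F} {β : ℝ} (hnorm : ∀ i, ‖V i‖ = 1)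
    (hangle : ∀ i j, i ≠ j → ⟪V i, V j⟫ = β) (d : ι → ℝ) :
    ‖∑ i, d i • V i‖ ^ 2 = (1 - β) * ∑ i, d i ^ 2 + β * (∑ i, d i) ^ 2 := by
  classical
  have hV : ∀ i j, ⟪V i, V j⟫ = β + if i = j then 1 - β else 0 := by
    intro i j
    split_ifs with h
    · rw [h, real_inner_self_eq_norm_sq, hnorm]; ring
    · rw [hangle i j h, add_zero]
  rw [← real_inner_self_eq_norm_sq, sum_inner]
  simp only [inner_sum, inner_smul_left, inner_smul_right, hV, RCLike.conj_to_real, mul_add,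
    mul_ite, mul_zero, Finset.sum_add_distrib, Finset.sum_ite_eq, Finset.mem_univ, if_true]
  rw [add_comm]
  congr 1
  · rw [Finset.mul_sum]
    exact Finset.sum_congr rfl fun i _ => by ring
  · rw [sq, Finset.sum_mul_sum, Finset.mul_sum]
    refine Finset.sum_congr rfl fun i _ => ?_
    rw [Finset.mul_sum]
    exact Finset.sum_congr rfl fun j _ => by ring

lemma sum_inner_eq_of_sum_eq_smul {V : ι → F} {E P : F} {r : ℝ}
    (hsum : ∑ i, V i = (Fintype.card ι / r) • E) (hEP : ⟪E, P⟫ = 1) :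
    ∑ i, ⟪V i, P⟫ = Fintype.card ι / r := by
  rw [← sum_inner, hsum, real_inner_smul_left, hEP, mul_one]

lemma sum_inner_sub_sq_le_of_equiangular {V : ι → F} {E P : F} {β r : ℝ}
    (hnorm : ∀ i, ‖V i‖ = 1) (hangle : ∀ i j, i ≠ j → ⟪V i, V j⟫ = β) (hβ : β ≤ 1)
    (hsum : ∑ i, V i = (Fintype.card ι / r) • E) (hEV : ∀ i, ⟪E, V i⟫ = 1) (hE : ‖E‖ ^ 2 = r)
    (hEP : ⟪E, P⟫ = 1) (hP : ‖P‖ = 1) :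
    ∑ i, (⟪V i, P⟫ - 1 / r) ^ 2 ≤ (1 - β) * (1 - 1 / r) := by
  set d : ι → ℝ := fun i => ⟪V i, P⟫ - 1 / r
  set S := ∑ i, d i ^ 2
  have hd : ∑ i, d i = 0 := by
    simp only [d, Finset.sum_sub_distrib, sum_inner_eq_of_sum_eq_smul hsum hEP, Finset.sum_const,
      Finset.card_univ, nsmul_eq_mul]
    ring
  set D := ∑ i, d i • V i
  set Y := P - r⁻¹ • E
  have hDY : ⟪D, Y⟫ = S := by
    have hc : ∀ i, ⟪V i, P⟫ = d i + 1 / r := fun i => (sub_add_cancel _ _).symm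
    simp only [D, Y, S, sum_inner, inner_sub_right, real_inner_smul_left, real_inner_smul_right,
      real_inner_comm E, hEV, hc, mul_one, ← Finset.mul_sum, hd, mul_zero, sub_zero, mul_add,
      Finset.sum_add_distrib, ← Finset.sum_mul, zero_mul, add_zero, sq]
  have hD : ‖D‖ ^ 2 = (1 - β) * S := by
    rw [norm_sq_sum_smul_of_equiangular hnorm hangle, hd]; ring
  have hY : ‖Y‖ ^ 2 = 1 - 1 / r := by
    rw [norm_sub_sq_real, real_inner_smul_right, real_inner_comm, hEP, norm_smul, mul_pow, hE, hP,
      Real.norm_eq_abs, sq_abs]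
    field_simp
    ring
  have hCS : S ^ 2 ≤ (1 - β) * S * (1 - 1 / r) := by
    calc S ^ 2 = |⟪D, Y⟫| ^ 2 := by rw [sq_abs, hDY]
      _ ≤ (‖D‖ * ‖Y‖) ^ 2 := pow_le_pow_left₀ (abs_nonneg _) (abs_real_inner_le_norm D Y) 2
      _ = (1 - β) * S * (1 - 1 / r) := by rw [mul_pow, hD, hY]
  have hS0 : 0 ≤ S := Finset.sum_nonneg fun i _ => sq_nonneg (d i)
  have hK : 0 ≤ (1 - β) * (1 - 1 / r) := mul_nonneg (by linarith) (hY ▸ sq_nonneg _)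
  rcases hS0.eq_or_lt with h | h
  · rwa [← h]
  · nlinarith

lemma sum_inner_sq_le_of_equiangular {V : ι → F} {E P : F} {β r : ℝ}
    (hnorm : ∀ i, ‖V i‖ = 1) (hangle : ∀ i j, i ≠ j → ⟪V i, V j⟫ = β) (hβ : β ≤ 1)
    (hsum : ∑ i, V i = (Fintype.card ι / r) • E) (hEV : ∀ i, ⟪E, V i⟫ = 1) (hE : ‖E‖ ^ 2 = r)
    (hEP : ⟪E, P⟫ = 1) (hP : ‖P‖ = 1) :
    ∑ i, ⟪V i, P⟫ ^ 2 ≤ (1 - β) * (1 - 1 / r) + Fintype.card ι / r ^ 2 := by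
  have hS := sum_inner_sub_sq_le_of_equiangular hnorm hangle hβ hsum hEV hE hEP hP
  calc ∑ i, ⟪V i, P⟫ ^ 2 = ∑ i, ((⟪V i, P⟫ - 1 / r) ^ 2 + 2 / r * ⟪V i, P⟫ - 1 / r ^ 2) :=
        Finset.sum_congr rfl fun i _ => by ring
    _ = ∑ i, (⟪V i, P⟫ - 1 / r) ^ 2 + Fintype.card ι / r ^ 2 := by
        rw [Finset.sum_sub_distrib, Finset.sum_add_distrib, ← Finset.mul_sum,
          sum_inner_eq_of_sum_eq_smul hsum hEP, Finset.sum_const, Finset.card_univ, nsmul_eq_mul]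
        ring
    _ ≤ _ := by linarith

lemma one_add_mul_eq_of_equiangular {V : ι → F} {E : F} {β r : ℝ}
    (hnorm : ∀ i, ‖V i‖ = 1) (hangle : ∀ i j, i ≠ j → ⟪V i, V j⟫ = β)
    (hsum : ∑ i, V i = (Fintype.card ι / r) • E) (hEV : ∀ i, ⟪E, V i⟫ = 1) (j : ι) :
    1 + (Fintype.card ι - 1) * β = Fintype.card ι / r := by
  classical
  have h := congrArg (⟪·, V j⟫) hsum
  simp only [sum_inner, real_inner_smul_left, hEV, mul_one] at h
  rw [← h, ← Finset.add_sum_erase _ _ (Finset.mem_univ j), real_inner_self_eq_norm_sq, hnorm,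
    Finset.sum_congr rfl fun i hi => hangle i j (Finset.ne_of_mem_erase hi)]
  simp [Finset.card_erase_of_mem, Nat.cast_pred (Fintype.card_pos_iff.mpr ⟨j⟩)]

theorem sum_inner_sq_le_of_equiangular_tight [Nontrivial ι] {V : ι → F} {E P : F} {β r : ℝ}
    (hr : 0 < r) (hnorm : ∀ i, ‖V i‖ = 1) (hangle : ∀ i j, i ≠ j → ⟪V i, V j⟫ = β)
    (hsum : ∑ i, V i = (Fintype.card ι / r) • E) (hEV : ∀ i, ⟪E, V i⟫ = 1) (hE : ‖E‖ ^ 2 = r)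
    (hEP : ⟪E, P⟫ = 1) (hP : ‖P‖ = 1) :
    ∑ i, ⟪V i, P⟫ ^ 2 ≤ (Fintype.card ι / r + r - 2) / (r * (1 - 1 / Fintype.card ι)) := by
  obtain ⟨i, j, hij⟩ := exists_pair_ne ι
  have hβ : β ≤ 1 := by
    simpa [hangle i j hij, hnorm] using real_inner_le_norm (V i) (V j)
  have hN : (1 : ℝ) < Fintype.card ι := by exact_mod_cast Fintype.one_lt_card
  have hN1 : (Fintype.card ι : ℝ) - 1 ≠ 0 := by linarith
  have hβN := one_add_mul_eq_of_equiangular hnorm hangle hsum hEV i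
  calc _ ≤ (1 - β) * (1 - 1 / r) + Fintype.card ι / r ^ 2 :=
        sum_inner_sq_le_of_equiangular hnorm hangle hβ hsum hEV hE hEP hP
    _ = _ := by
        have : β = (Fintype.card ι / r - 1) / (Fintype.card ι - 1) := by
          rw [← hβN]; field_simp; ring
        rw [this]
        field_simp
        ring

end Equiangular

section Flatten

variable {n : Type*} [Fintype n]

noncomputable def flattenMatrix : Matrix n n ℂ →ₗ[ℂ] EuclideanSpace ℂ (n × n) where
  toFun A := WithLp.toLp 2 fun p => A p.1 p.2
  map_add' _ _ := rfl
  map_smul' _ _ := rfl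

lemma inner_flattenMatrix (A B : Matrix n n ℂ) :
    ⟪flattenMatrix A, flattenMatrix B⟫_ℂ = ∑ k, ∑ l, star (A k l) * B k l := by
  change (fun p : n × n => B p.1 p.2) ⬝ᵥ star (fun p : n × n => A p.1 p.2) = _
  simp only [dotProduct, Fintype.sum_prod_type, Pi.star_apply, mul_comm]

lemma inner_flattenMatrix_vecMulVec (a b c d : n → ℂ) :
    ⟪flattenMatrix (vecMulVec a (star b)), flattenMatrix (vecMulVec c (star d))⟫_ℂ
      = (star a ⬝ᵥ c) * (star d ⬝ᵥ b) := by
  simp only [inner_flattenMatrix, vecMulVec_apply, dotProduct, Finset.sum_mul_sum, Pi.star_apply,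
    star_mul, star_star]
  exact Finset.sum_congr rfl fun k _ => Finset.sum_congr rfl fun l _ => by ring

lemma re_inner_flattenMatrix_vecMulVec_self (a b : n → ℂ) :
    RCLike.re ⟪flattenMatrix (vecMulVec a (star a)), flattenMatrix (vecMulVec b (star b))⟫_ℂ
      = ‖star a ⬝ᵥ b‖ ^ 2 := by
  rw [inner_flattenMatrix_vecMulVec, star_dotProduct b a, RCLike.star_def, RCLike.mul_conj]
  norm_cast

lemma norm_flattenMatrix_vecMulVec_self (a : n → ℂ) :
    ‖flattenMatrix (vecMulVec a (star a))‖ = ‖star a ⬝ᵥ a‖ := by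
  rw [← sq_eq_sq₀ (norm_nonneg _) (norm_nonneg _), ← re_inner_flattenMatrix_vecMulVec_self,
    ← inner_self_eq_norm_sq (𝕜 := ℂ)]

variable [DecidableEq n]

lemma inner_flattenMatrix_one_vecMulVec (a b : n → ℂ) :
    ⟪flattenMatrix 1, flattenMatrix (vecMulVec a (star b))⟫_ℂ = star b ⬝ᵥ a := by
  simp [inner_flattenMatrix, one_apply, dotProduct, vecMulVec_apply, mul_comm]

lemma norm_flattenMatrix_one_sq : ‖flattenMatrix (1 : Matrix n n ℂ)‖ ^ 2 = Fintype.card n := by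
  rw [← inner_self_eq_norm_sq (𝕜 := ℂ), inner_flattenMatrix]
  simp [one_apply]

end Flatten

lemma star_dotProduct_self_eq {n : Type*} [Fintype n] (u : n → ℂ) :
    star u ⬝ᵥ u = ((∑ k, ‖u k‖ ^ 2 : ℝ) : ℂ) := by
  simp [dotProduct, Complex.conj_mul']

theorem sum_norm_star_dotProduct_pow_four_le {ι n : Type*} [Fintype ι] [Nontrivial ι] [Fintype n]
    [DecidableEq n] [Nonempty n] {v : ι → n → ℂ} {y : n → ℂ} {α : ℝ}
    (hunit : ∀ i, star (v i) ⬝ᵥ v i = 1)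
    (htight : ∑ i, vecMulVec (v i) (star (v i)) = (Fintype.card ι / Fintype.card n : ℂ) • 1)
    (hangle : ∀ i j, i ≠ j → ‖star (v i) ⬝ᵥ v j‖ = α) (hy : star y ⬝ᵥ y = 1) :
    ∑ i, ‖star y ⬝ᵥ v i‖ ^ 4 ≤ (Fintype.card ι / Fintype.card n + Fintype.card n - 2)
      / (Fintype.card n * (1 - 1 / Fintype.card ι)) := by
  -- Only local: as an instance it would clash with `PiLp.innerProductSpace`. Here
  -- `⟪x, y⟫_ℝ = re ⟪x, y⟫_ℂ` and `(t : ℝ) • x = (t : ℂ) • x` hold by `rfl`.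
  let _ : InnerProductSpace ℝ (EuclideanSpace ℂ (n × n)) := InnerProductSpace.complexToReal
  set V : ι → EuclideanSpace ℂ (n × n) := fun i => flattenMatrix (vecMulVec (v i) (star (v i)))
  set P := flattenMatrix (vecMulVec y (star y))
  have hVP : ∀ i, ⟪V i, P⟫ = ‖star y ⬝ᵥ v i‖ ^ 2 := fun i => by
    rw [real_inner_eq_re_inner ℂ, re_inner_flattenMatrix_vecMulVec_self, star_dotProduct, norm_star]
  have key := sum_inner_sq_le_of_equiangular_tight (V := V) (E := flattenMatrix 1) (P := P)
    (β := α ^ 2) (r := Fintype.card n) (by exact_mod_cast Fintype.card_pos)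
    (fun i => by simp [V, norm_flattenMatrix_vecMulVec_self, hunit])
    (fun i j hij => by
      rw [real_inner_eq_re_inner ℂ, re_inner_flattenMatrix_vecMulVec_self, hangle i j hij])
    (by
      rw [← map_sum, htight, map_smul]
      change _ = ((Fintype.card ι / Fintype.card n : ℝ) : ℂ) • flattenMatrix (1 : Matrix n n ℂ)
      push_cast; rfl)
    (fun i => by simp [real_inner_eq_re_inner ℂ, V, inner_flattenMatrix_one_vecMulVec, hunit])
    norm_flattenMatrix_one_sq
    (by simp [real_inner_eq_re_inner ℂ, P, inner_flattenMatrix_one_vecMulVec, hy])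
    (by simp [P, norm_flattenMatrix_vecMulVec_self, hy])
  simpa only [hVP, ← pow_mul] using key

/-- For an ETF and any unit vector `y`, `∑ᵢ |⟨y, vᵢ⟩|⁴ ≤ (N/r + r - 2)/(r(1-1/N))`. -/
theorem stmt_11 (N r : ℕ) (hr : 2 ≤ r) (hNr : r < N)
    (v : Fin N → Fin r → ℂ)
    (hunit : ∀ i, ∑ k, ‖v i k‖ ^ 2 = 1)
    (htight : (∑ i, Matrix.vecMulVec (v i) (fun l => (starRingEnd ℂ) (v i l)))
      = ((N : ℂ) / (r : ℂ)) • (1 : Matrix (Fin r) (Fin r) ℂ))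
    (α : ℝ)
    (heq : ∀ i j : Fin N, i ≠ j → ‖∑ k, (starRingEnd ℂ) (v i k) * v j k‖ = α)
    (y : Fin r → ℂ) (hy : ∑ k, ‖y k‖ ^ 2 = 1) :
    ∑ i, ‖∑ k, (starRingEnd ℂ) (y k) * v i k‖ ^ 4
      ≤ ((N : ℝ) / (r : ℝ) + (r : ℝ) - 2) / ((r : ℝ) * (1 - 1 / (N : ℝ))) := by
  have : Nontrivial (Fin N) := Fin.nontrivial_iff_two_le.mpr (by omega)
  have : Nonempty (Fin r) := ⟨⟨0, by omega⟩⟩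
  have h := sum_norm_star_dotProduct_pow_four_le (v := v) (y := y)
    (fun i => by rw [star_dotProduct_self_eq, hunit, Complex.ofReal_one])
    (by rw [Fintype.card_fin, Fintype.card_fin]; exact htight) heq
    (by rw [star_dotProduct_self_eq, hy, Complex.ofReal_one])
  rwa [Fintype.card_fin, Fintype.card_fin] at h
end

section
/- (ETF sparsity bound) If v_1, ..., v_N ∈ C^r form an ETF with synthesis matrix V, then every nonzero vector x in the row space of V satisfies ‖x‖_0 ≥ N·(1 + (r-1)²/(N-1))^{-1}. -/
/-!
Write `p i = ‖x i‖ ^ 2 = ‖⟪v i, y⟫‖ ^ 2` and `t = ‖y‖ ^ 2`. Tightness gives `∑ p i = (N / r) t`,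
and Cauchy–Schwarz on the support of `x` gives `(∑ p i) ^ 2 ≤ ‖x‖₀ ∑ p i ^ 2`, so it remains to
bound the fourth moment `∑ p i ^ 2`.

For this, pass to the traceless Hermitian matrices `M i = v i v iᴴ - 1 / r` and
`Q = y yᴴ - t / r` with the Frobenius inner product: `⟪M i, Q⟫ = p i - t / r`,
`‖Q‖ ^ 2 = (1 - 1 / r) t ^ 2`, and equiangularity makes the Gram matrix of the `M i` equal to
`(1 - α ^ 2) I + (α ^ 2 - 1 / r) J`. The coefficients `c i = p i - t / r` sum to zero, so pairing
`Q` with `∑ c i M i` gives `∑ c i ^ 2 ≤ (1 - α ^ 2) ‖Q‖ ^ 2`. Welch's identity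
`1 + (N - 1) α ^ 2 = N / r` turns this into
`∑ p i ^ 2 ≤ (N / r ^ 2) (1 + (r - 1) ^ 2 / (N - 1)) t ^ 2`.
-/

open Finset Matrix RCLike
open scoped InnerProductSpace ComplexConjugate

section InnerProductSpace

variable {𝕜 E ι : Type*} [RCLike 𝕜] [NormedAddCommGroup E] [InnerProductSpace 𝕜 E] [Fintype ι]

theorem sum_sq_re_inner_le_of_re_inner_eq [DecidableEq ι] (M : ι → E) (Q : E) {a b : ℝ}
    (hb : 0 ≤ b) (hM : ∀ i j, re ⟪M i, M j⟫_𝕜 = a + if i = j then b else 0)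
    (hQ : ∑ i, re ⟪M i, Q⟫_𝕜 = 0) :
    ∑ i, re ⟪M i, Q⟫_𝕜 ^ 2 ≤ b * ‖Q‖ ^ 2 := by
  set c := fun i => re ⟪M i, Q⟫_𝕜
  set S := ∑ i, c i ^ 2 with hS
  set B : E := ∑ i, (c i : 𝕜) • M i
  have hB : ‖B‖ ^ 2 = b * S := by
    rw [← inner_self_eq_norm_sq (𝕜 := 𝕜)]
    simp only [B, sum_inner, inner_sum, inner_smul_left, inner_smul_right, conj_ofReal,
      map_sum, ← mul_assoc, re_ofReal_mul, hM, mul_add, mul_ite, mul_zero,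
      sum_add_distrib, ← sum_mul, sum_ite_eq', mem_univ, if_true]
    rw [hQ, zero_mul, zero_mul, zero_add, mul_comm, hS]
    simp only [sq]
  have hBQ : re ⟪B, Q⟫_𝕜 = S := by
    simp only [B, sum_inner, inner_smul_left, conj_ofReal, map_sum, re_ofReal_mul, S, sq, c]
  have hS2 : S * S ≤ S * (b * ‖Q‖ ^ 2) :=
    calc S * S = re ⟪B, Q⟫_𝕜 ^ 2 := by rw [hBQ, sq]
      _ ≤ (‖B‖ * ‖Q‖) ^ 2 := by
          have h := (abs_re_le_norm ⟪B, Q⟫_𝕜).trans (norm_inner_le_norm B Q)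
          exact sq_le_sq' (abs_le.mp h).1 (abs_le.mp h).2
      _ = S * (b * ‖Q‖ ^ 2) := by rw [mul_pow, hB]; ring
  rcases (show 0 ≤ S from sum_nonneg fun i _ => sq_nonneg (c i)).eq_or_lt with h0 | hpos
  · rw [← h0]; positivity
  · exact le_of_mul_le_mul_left hS2 hpos

variable {u : ι → E} {A : ℝ}

theorem sum_norm_inner_sq_eq_of_sum_inner_smul_eq
    (hu : ∀ w, ∑ i, ⟪u i, w⟫_𝕜 • u i = (A : 𝕜) • w) (w : E) :
    ∑ i, ‖⟪u i, w⟫_𝕜‖ ^ 2 = A * ‖w‖ ^ 2 := by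
  have hterm (i : ι) : ⟪w, ⟪u i, w⟫_𝕜 • u i⟫_𝕜 = ((‖⟪u i, w⟫_𝕜‖ ^ 2 : ℝ) : 𝕜) := by
    rw [inner_smul_right, ← inner_conj_symm w (u i), RCLike.mul_conj, ofReal_pow]
  calc ∑ i, ‖⟪u i, w⟫_𝕜‖ ^ 2 = re ⟪w, ∑ i, ⟪u i, w⟫_𝕜 • u i⟫_𝕜 := by
        simp only [inner_sum, hterm, ← ofReal_sum, ofReal_re]
    _ = A * ‖w‖ ^ 2 := by
        rw [hu, inner_smul_right, re_ofReal_mul, inner_self_eq_norm_sq]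

theorem card_mul_sq_add_one_sub_sq_eq {α : ℝ} (hu : ∀ w, ∑ i, ⟪u i, w⟫_𝕜 • u i = (A : 𝕜) • w)
    (hunit : ∀ i, ‖u i‖ = 1) (hequi : ∀ i j, i ≠ j → ‖⟪u i, u j⟫_𝕜‖ = α) (i₀ : ι) :
    Fintype.card ι * α ^ 2 + (1 - α ^ 2) = A := by
  classical
  have hterm (j : ι) : ‖⟪u j, u i₀⟫_𝕜‖ ^ 2 = α ^ 2 + if j = i₀ then 1 - α ^ 2 else 0 := by
    split_ifs with h
    · rw [h, inner_self_eq_norm_sq_to_K, hunit]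
      simp
    · rw [hequi j i₀ h, add_zero]
  have h := sum_norm_inner_sq_eq_of_sum_inner_smul_eq hu (u i₀)
  simpa only [hterm, sum_add_distrib, sum_const, card_univ, nsmul_eq_mul, sum_ite_eq', mem_univ,
    if_true, hunit, one_pow, mul_one] using h

end InnerProductSpace

section Support

variable {ι E : Type*} [Fintype ι] [NormedAddCommGroup E] [DecidableEq E]

theorem sq_sum_norm_sq_le_card_support_mul (x : ι → E) :
    (∑ i, ‖x i‖ ^ 2) ^ 2 ≤ (univ.filter fun i => x i ≠ 0).card * ∑ i, (‖x i‖ ^ 2) ^ 2 := by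
  set S := univ.filter fun i => x i ≠ 0
  have hS : ∑ i ∈ S, ‖x i‖ ^ 2 = ∑ i, ‖x i‖ ^ 2 :=
    sum_filter_of_ne fun i _ h => by simpa using h
  calc (∑ i, ‖x i‖ ^ 2) ^ 2 = (∑ i ∈ S, ‖x i‖ ^ 2) ^ 2 := by rw [hS]
    _ ≤ S.card * ∑ i ∈ S, (‖x i‖ ^ 2) ^ 2 := sq_sum_le_card_mul_sum_sq
    _ ≤ S.card * ∑ i, (‖x i‖ ^ 2) ^ 2 := by
        gcongr
        exact subset_univ S

theorem sum_sq_eq_sum_sub_sq_add (f : ι → ℝ) (m : ℝ) (h : ∑ i, (f i - m) = 0) :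
    ∑ i, f i ^ 2 = ∑ i, (f i - m) ^ 2 + Fintype.card ι * m ^ 2 := by
  have hsq (i : ι) : f i ^ 2 = (f i - m) ^ 2 + 2 * m * (f i - m) + m ^ 2 := by ring
  simp only [hsq, sum_add_distrib, ← mul_sum, h, sum_const, card_univ, nsmul_eq_mul]
  ring

end Support

section EuclideanSpace

variable {𝕜 ι n : Type*} [RCLike 𝕜] [Fintype ι] [Fintype n]

theorem card_ne_zero_of_ne_zero (x : EuclideanSpace 𝕜 n) (hx : x ≠ 0) : Fintype.card n ≠ 0 := by
  have : Nonempty n := by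
    by_contra hn
    rw [not_nonempty_iff] at hn
    exact hx (Subsingleton.elim x 0)
  exact Fintype.card_ne_zero

variable {u : ι → EuclideanSpace 𝕜 n}

theorem sum_norm_inner_sq_sub_eq_zero
    (hu : ∀ w, ∑ i, ⟪u i, w⟫_𝕜 • u i = ((Fintype.card ι / Fintype.card n : ℝ) : 𝕜) • w)
    (z : EuclideanSpace 𝕜 n) :
    ∑ i, (‖⟪u i, z⟫_𝕜‖ ^ 2 - ‖z‖ ^ 2 / Fintype.card n) = 0 := by
  rw [sum_sub_distrib, sum_norm_inner_sq_eq_of_sum_inner_smul_eq hu, sum_const, card_univ,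
    nsmul_eq_mul]
  ring

variable [DecidableEq n]

theorem sum_inner_smul_eq_of_sum_vecMulVec_eq (v : ι → n → 𝕜) (A : 𝕜)
    (h : ∑ i, vecMulVec (v i) (fun l => conj (v i l)) = A • (1 : Matrix n n 𝕜))
    (w : EuclideanSpace 𝕜 n) :
    ∑ i, ⟪WithLp.toLp 2 (v i), w⟫_𝕜 • WithLp.toLp 2 (v i) = A • w := by
  ext k
  have hk := congrFun (congrArg (· *ᵥ w.ofLp) h) k
  simp only [sum_mulVec, vecMulVec_mulVec, smul_mulVec, one_mulVec] at hk
  simp only [WithLp.ofLp_sum, WithLp.ofLp_smul, PiLp.inner_apply, inner_apply']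
  simpa only [op_smul_eq_smul, dotProduct] using hk

/-- The matrix `x xᴴ - s • 1`, as a vector of `EuclideanSpace 𝕜 (n × n)`, whose inner product is
the Frobenius inner product of matrices. -/
def outerSubScalar (x : EuclideanSpace 𝕜 n) (s : ℝ) : EuclideanSpace 𝕜 (n × n) :=
  WithLp.toLp 2 fun p => x p.1 * conj (x p.2) - if p.1 = p.2 then (s : 𝕜) else 0

theorem inner_outerSubScalar (x y : EuclideanSpace 𝕜 n) (s s' : ℝ) :
    ⟪outerSubScalar x s, outerSubScalar y s'⟫_𝕜 =
      ((‖⟪x, y⟫_𝕜‖ ^ 2 - s * ‖y‖ ^ 2 - s' * ‖x‖ ^ 2 + s * s' * Fintype.card n : ℝ) : 𝕜) := by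
  have expand (k l : n) :
      (conj (x k) * x l - if k = l then (s : 𝕜) else 0) *
          (y k * conj (y l) - if k = l then (s' : 𝕜) else 0)
        = conj (x k) * y k * (x l * conj (y l)) - (if k = l then s * (conj (y k) * y k) else 0)
          - (if k = l then s' * (conj (x k) * x k) else 0)
          + (if k = l then (s * s' : 𝕜) else 0) := by
    split_ifs with hkl
    · subst hkl; ring
    · ring
  simp only [outerSubScalar, PiLp.inner_apply, inner_apply', Fintype.sum_prod_type, map_sub,
    map_mul, conj_conj, apply_ite (starRingEnd 𝕜), map_zero, conj_ofReal, expand,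
    sum_add_distrib, sum_sub_distrib, sum_ite_eq, mem_univ, if_true, ← mul_sum, ← sum_mul]
  simp only [ofReal_add, ofReal_sub, ofReal_pow, ofReal_natCast, ← RCLike.conj_mul,
    EuclideanSpace.norm_sq_eq, map_sum, map_mul, conj_conj, sum_const, card_univ, nsmul_eq_mul]
  ring

variable [Nontrivial ι] {α : ℝ}

theorem sum_sq_norm_inner_sq_sub_le
    (hu : ∀ w, ∑ i, ⟪u i, w⟫_𝕜 • u i = ((Fintype.card ι / Fintype.card n : ℝ) : 𝕜) • w)
    (hunit : ∀ i, ‖u i‖ = 1) (hequi : ∀ i j, i ≠ j → ‖⟪u i, u j⟫_𝕜‖ = α)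
    (z : EuclideanSpace 𝕜 n) :
    ∑ i, (‖⟪u i, z⟫_𝕜‖ ^ 2 - ‖z‖ ^ 2 / Fintype.card n) ^ 2 ≤
      (1 - α ^ 2) * ((1 - 1 / Fintype.card n) * (‖z‖ ^ 2) ^ 2) := by
  classical
  set d : ℝ := (Fintype.card n : ℝ) with hd_def
  set t := ‖z‖ ^ 2
  have hα : α ^ 2 ≤ 1 := by
    obtain ⟨i, j, hij⟩ := exists_pair_ne ι
    have h := norm_inner_le_norm (𝕜 := 𝕜) (u i) (u j)
    rw [hequi i j hij, hunit, hunit, mul_one] at h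
    nlinarith [hequi i j hij ▸ norm_nonneg ⟪u i, u j⟫_𝕜]
  have hd : d ≠ 0 := Nat.cast_ne_zero.mpr (card_ne_zero_of_ne_zero (u (Classical.arbitrary ι))
    (ne_zero_of_norm_ne_zero (by simp [hunit])))
  have hMM (i j : ι) : re ⟪outerSubScalar (u i) (1 / d), outerSubScalar (u j) (1 / d)⟫_𝕜
      = (α ^ 2 - 1 / d) + if i = j then 1 - α ^ 2 else 0 := by
    rw [inner_outerSubScalar, ofReal_re, hunit, hunit, ← hd_def]
    split_ifs with h
    · rw [h, ← inner_self_re_eq_norm, inner_self_eq_norm_sq, hunit]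
      field_simp
      ring
    · rw [hequi i j h]
      field_simp
      ring
  have hMQ (i : ι) : re ⟪outerSubScalar (u i) (1 / d), outerSubScalar z (t / d)⟫_𝕜
      = ‖⟪u i, z⟫_𝕜‖ ^ 2 - t / d := by
    rw [inner_outerSubScalar, ofReal_re, hunit, ← hd_def]
    field_simp
    ring
  have hQ : ‖outerSubScalar z (t / d)‖ ^ 2 = (1 - 1 / d) * t ^ 2 := by
    rw [← inner_self_eq_norm_sq (𝕜 := 𝕜), inner_outerSubScalar, ofReal_re,
      ← inner_self_re_eq_norm, inner_self_eq_norm_sq, ← hd_def]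
    field_simp
    ring
  have key := sum_sq_re_inner_le_of_re_inner_eq (fun i => outerSubScalar (u i) (1 / d))
    (outerSubScalar z (t / d)) (sub_nonneg.mpr hα) hMM
    (by simpa only [hMQ] using sum_norm_inner_sq_sub_eq_zero hu z)
  simpa only [hMQ, hQ] using key

theorem sum_norm_inner_sq_sq_le
    (hu : ∀ w, ∑ i, ⟪u i, w⟫_𝕜 • u i = ((Fintype.card ι / Fintype.card n : ℝ) : 𝕜) • w)
    (hunit : ∀ i, ‖u i‖ = 1) (hequi : ∀ i j, i ≠ j → ‖⟪u i, u j⟫_𝕜‖ = α)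
    (z : EuclideanSpace 𝕜 n) :
    ∑ i, (‖⟪u i, z⟫_𝕜‖ ^ 2) ^ 2 ≤ Fintype.card ι / Fintype.card n ^ 2 *
      (1 + (Fintype.card n - 1) ^ 2 / (Fintype.card ι - 1)) * ‖z‖ ^ 4 := by
  obtain ⟨i₀⟩ := (inferInstance : Nonempty ι)
  have hd : (Fintype.card n : ℝ) ≠ 0 := Nat.cast_ne_zero.mpr
    (card_ne_zero_of_ne_zero (u i₀) (ne_zero_of_norm_ne_zero (by simp [hunit])))
  have hN : (Fintype.card ι : ℝ) - 1 ≠ 0 :=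
    sub_ne_zero.mpr (by exact_mod_cast Fintype.one_lt_card.ne')
  have hwelch := card_mul_sq_add_one_sub_sq_eq hu hunit hequi i₀
  have hcoeff : (1 - α ^ 2) * (1 - 1 / Fintype.card n) + Fintype.card ι / Fintype.card n ^ 2
      = Fintype.card ι / Fintype.card n ^ 2 *
        (1 + (Fintype.card n - 1) ^ 2 / (Fintype.card ι - 1)) := by
    field_simp
    field_simp at hwelch
    linear_combination (1 - (Fintype.card n : ℝ)) * hwelch
  rw [sum_sq_eq_sum_sub_sq_add _ _ (sum_norm_inner_sq_sub_eq_zero hu z), ← hcoeff]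
  have hvar := sum_sq_norm_inner_sq_sub_le hu hunit hequi z
  calc _ ≤ (1 - α ^ 2) * ((1 - 1 / Fintype.card n) * (‖z‖ ^ 2) ^ 2)
          + Fintype.card ι * (‖z‖ ^ 2 / Fintype.card n) ^ 2 := by linarith
    _ = _ := by ring

theorem card_mul_inv_le_card_filter_inner_ne_zero
    (hu : ∀ w, ∑ i, ⟪u i, w⟫_𝕜 • u i = ((Fintype.card ι / Fintype.card n : ℝ) : 𝕜) • w)
    (hunit : ∀ i, ‖u i‖ = 1) (hequi : ∀ i j, i ≠ j → ‖⟪u i, u j⟫_𝕜‖ = α)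
    {z : EuclideanSpace 𝕜 n} (hz : z ≠ 0) :
    (Fintype.card ι : ℝ) * (1 + ((Fintype.card n : ℝ) - 1) ^ 2 / (Fintype.card ι - 1))⁻¹
      ≤ (univ.filter fun i => ⟪u i, z⟫_𝕜 ≠ 0).card := by
  set N : ℝ := (Fintype.card ι : ℝ)
  set d : ℝ := (Fintype.card n : ℝ)
  set K := 1 + (d - 1) ^ 2 / (N - 1)
  set s : ℝ := ((univ.filter fun i => ⟪u i, z⟫_𝕜 ≠ 0).card : ℝ)
  have hN : 1 < N := Nat.one_lt_cast.mpr Fintype.one_lt_card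
  have hd : d ≠ 0 := Nat.cast_ne_zero.mpr (card_ne_zero_of_ne_zero (u (Classical.arbitrary ι))
    (ne_zero_of_norm_ne_zero (by simp [hunit])))
  have hK : 0 < K := by positivity
  have hpos : 0 < N / d ^ 2 * ‖z‖ ^ 4 := by
    have := norm_pos_iff.mpr hz
    positivity
  rw [← div_eq_mul_inv, div_le_iff₀ hK]
  refine le_of_mul_le_mul_right ?_ hpos
  calc N * (N / d ^ 2 * ‖z‖ ^ 4) = (∑ i, ‖⟪u i, z⟫_𝕜‖ ^ 2) ^ 2 := by
        rw [sum_norm_inner_sq_eq_of_sum_inner_smul_eq hu z]; field_simp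
    _ ≤ s * ∑ i, (‖⟪u i, z⟫_𝕜‖ ^ 2) ^ 2 := sq_sum_norm_sq_le_card_support_mul _
    _ ≤ s * (N / d ^ 2 * K * ‖z‖ ^ 4) := by
        gcongr
        exact sum_norm_inner_sq_sq_le hu hunit hequi z
    _ = s * K * (N / d ^ 2 * ‖z‖ ^ 4) := by ring

end EuclideanSpace

/-- ETF sparsity bound: every nonzero vector in the row space of the synthesis
    matrix `V` (i.e. of the form `Vᴴ y`) has at least `N(1 + (r-1)²/(N-1))⁻¹`
    nonzero entries. -/
theorem stmt_13 (N r : ℕ) (hr : 2 ≤ r) (hNr : r < N)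
    (v : Fin N → Fin r → ℂ)
    (hunit : ∀ i, ∑ k, ‖v i k‖ ^ 2 = 1)
    (htight : (∑ i, Matrix.vecMulVec (v i) (fun l => (starRingEnd ℂ) (v i l)))
      = ((N : ℂ) / (r : ℂ)) • (1 : Matrix (Fin r) (Fin r) ℂ))
    (α : ℝ)
    (heq : ∀ i j : Fin N, i ≠ j → ‖∑ k, (starRingEnd ℂ) (v i k) * v j k‖ = α)
    (y : Fin r → ℂ) (x : Fin N → ℂ)
    (hx : x = fun i => ∑ k, (starRingEnd ℂ) (v i k) * y k)
    (hx0 : x ≠ 0) :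
    (N : ℝ) * (1 + ((r : ℝ) - 1) ^ 2 / ((N : ℝ) - 1))⁻¹
      ≤ ((Finset.univ.filter fun i => x i ≠ 0).card : ℝ) := by
  have : Nontrivial (Fin N) := Fin.nontrivial_iff_two_le.mpr (by omega)
  set u : Fin N → EuclideanSpace ℂ (Fin r) := fun i => WithLp.toLp 2 (v i)
  set z : EuclideanSpace ℂ (Fin r) := WithLp.toLp 2 y
  have hxu : x = fun i => ⟪u i, z⟫_ℂ := by
    simp only [hx, u, z, PiLp.inner_apply, inner_apply', mul_comm]
  have hframe (w : EuclideanSpace ℂ (Fin r)) : ∑ i, ⟪u i, w⟫_ℂ • u i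
      = ((Fintype.card (Fin N) / Fintype.card (Fin r) : ℝ) : ℂ) • w := by
    rw [sum_inner_smul_eq_of_sum_vecMulVec_eq v _ htight]
    simp
  have hunit' (i : Fin N) : ‖u i‖ = 1 := by simp [EuclideanSpace.norm_eq, u, hunit]
  have hequi (i j : Fin N) (hij : i ≠ j) : ‖⟪u i, u j⟫_ℂ‖ = α := by
    simpa only [u, PiLp.inner_apply, inner_apply'] using heq i j hij
  have hz : z ≠ 0 := by
    rintro hz
    exact hx0 (by ext i; simp [hxu, hz])
  rw [hxu]
  simpa only [Fintype.card_fin] using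
    card_mul_inv_le_card_filter_inner_ne_zero hframe hunit' hequi hz
end

section
/- (Gershgorin spark bound) If v_1, ..., v_N ∈ C^r form an ETF with coherence α, then any nonzero x ∈ C^N with Vx = 0 satisfies ‖x‖_0 ≥ 1 + 1/α; equivalently, any set of at most ⌊1/α⌋ of the ETF vectors is linearly independent. -/
open BigOperators

/-- Gershgorin spark bound: a nonzero vector in the kernel of the synthesis
    matrix of an ETF with coherence `α` has at least `1 + 1/α` nonzero entries. -/
theorem stmt_14 (N r : ℕ)
    (v : Fin N → Fin r → ℂ)
    (hunit : ∀ i, ∑ k, ‖v i k‖ ^ 2 = 1)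
    (α : ℝ) (hα0 : 0 < α) (hα1 : α < 1)
    (heq : ∀ i j : Fin N, i ≠ j → ‖∑ k, (starRingEnd ℂ) (v i k) * v j k‖ = α)
    (x : Fin N → ℂ) (hx0 : x ≠ 0)
    (hker : ∀ k : Fin r, ∑ i, v i k * x i = 0) :
    1 + 1 / α ≤ ((Finset.univ.filter fun i => x i ≠ 0).card : ℝ) := by
  set S := Finset.univ.filter fun i => x i ≠ 0 with hS
  have hSne : S.Nonempty := by
    obtain ⟨i, hi⟩ := Function.ne_iff.mp hx0
    exact ⟨i, by simp only [hS, Finset.mem_filter, Finset.mem_univ, true_and]; simpa using hi⟩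
  obtain ⟨i₀, hi₀S, hmax⟩ := S.exists_max_image (fun i => ‖x i‖) hSne
  have hxi₀ : x i₀ ≠ 0 := by simpa [hS] using hi₀S
  have hM : 0 < ‖x i₀‖ := norm_pos_iff.mpr hxi₀
  set g : Fin N → ℂ := fun i => ∑ k, (starRingEnd ℂ) (v i₀ k) * v i k with hg
  have hA : ∑ i, g i * x i = 0 := by
    have h1 : ∑ i, g i * x i
        = ∑ i, ∑ k, (starRingEnd ℂ) (v i₀ k) * (v i k * x i) := by
      refine Finset.sum_congr rfl fun i _ => ?_
      rw [hg, Finset.sum_mul]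
      exact Finset.sum_congr rfl fun k _ => by ring
    rw [h1, Finset.sum_comm]
    simp [← Finset.mul_sum, hker]
  have hB : g i₀ = 1 := by
    have h2 : g i₀ = ((∑ k, ‖v i₀ k‖ ^ 2 : ℝ) : ℂ) := by
      push_cast
      simp [hg, RCLike.conj_mul]
    rw [h2, hunit i₀]; norm_num
  have h3 := Finset.add_sum_erase Finset.univ (fun i => g i * x i) (Finset.mem_univ i₀)
  rw [hA] at h3
  rw [hB, one_mul] at h3
  have hsplit : x i₀ = -∑ i ∈ Finset.univ.erase i₀, g i * x i := by
    linear_combination h3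
  have hcard1 : 1 ≤ S.card := Finset.card_pos.mpr hSne
  have hbound : ‖x i₀‖ ≤ α * ((S.card : ℝ) - 1) * ‖x i₀‖ := by
    calc ‖x i₀‖ = ‖∑ i ∈ S.erase i₀, g i * x i‖ := by
          rw [hsplit, norm_neg]
          congr 1
          refine (Finset.sum_subset (Finset.erase_subset_erase _ (Finset.subset_univ S))
            fun i hi hni => ?_).symm
          have hxi : x i = 0 := by
            by_contra hc
            exact hni (Finset.mem_erase.mpr ⟨Finset.ne_of_mem_erase hi, by simp [hS, hc]⟩)
          simp [hxi]
      _ ≤ ∑ i ∈ S.erase i₀, ‖g i * x i‖ := norm_sum_le _ _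
      _ = ∑ i ∈ S.erase i₀, α * ‖x i‖ := by
          refine Finset.sum_congr rfl fun i hi => ?_
          rw [norm_mul, hg, heq i₀ i (Ne.symm (Finset.ne_of_mem_erase hi))]
      _ ≤ ∑ i ∈ S.erase i₀, α * ‖x i₀‖ :=
          Finset.sum_le_sum fun i hi =>
            mul_le_mul_of_nonneg_left (hmax i (Finset.mem_of_mem_erase hi)) hα0.le
      _ = α * ((S.card : ℝ) - 1) * ‖x i₀‖ := by
          rw [Finset.sum_const, nsmul_eq_mul, Finset.card_erase_of_mem hi₀S,
            Nat.cast_sub hcard1]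
          push_cast; ring
  have h4 : 1 ≤ α * ((S.card : ℝ) - 1) := by nlinarith
  have h5 : 1 / α ≤ (S.card : ℝ) - 1 := by
    rw [div_le_iff₀ hα0]; nlinarith
  linarith
end

section
/- If v_1, ..., v_N ∈ C^r form an ETF and a, b are two rows of the synthesis matrix V viewed as vectors in C^N (so ⟨a,b⟩ = 0 and ‖a‖² = ‖b‖² = N/r), then setting D = (N/r²)(1 + (r-1)²/(N-1)) and E = (N/r - 1)/(r(1-1/N)), we have D ≥ ‖a‖_4⁴, D ≥ ‖b‖_4⁴, and |⟨|a|^{⊙2}, |b|^{⊙2}⟩ - E|² ≤ (D - ‖a‖_4⁴)(D - ‖b‖_4⁴). -/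
/-!
For real weights `f`, the operator `G_f = ∑ᵢ fᵢ vᵢ vᵢᴴ` has squared Frobenius norm
`∑ᵢⱼ fᵢ fⱼ |⟨vᵢ, vⱼ⟩|²`, which for an equiangular frame is `(1 - α²) ‖f‖² + α² (∑ f)²`;
with `f = 1` tightness turns this into the Welch equality `α² (N - 1) = N / r - 1`.

Take `fᵢ = s |aᵢ|² + t |bᵢ|² - (s + t) / r`. Then `∑ f = 0`, the diagonal `d` of `G_f` is real
with `∑ d = 0`, and `‖f‖² = s dₖ + t dₗ`. Cauchy–Schwarz against the projection of `s eₖ + t eₗ`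
onto the sum-zero vectors, together with `‖d‖² ≤ ‖G_f‖²_F = (1 - α²) ‖f‖²`, gives
`‖f‖² ≤ (1 - α²) (s² + t² - (s + t)² / r)`. Expanded, this says that the quadratic form with
coefficients `D - ‖a‖₄⁴`, `E - ⟨|a|², |b|²⟩`, `D - ‖b‖₄⁴` is positive semidefinite.
-/

open Matrix BigOperators

open Finset ComplexConjugate

variable {ι κ : Type*} [Fintype ι] [Fintype κ]

lemma sum_sum_mul_mul_eq_of_const_offDiag (f : ι → ℝ) {c : ι → ι → ℝ} {β : ℝ}
    (hdiag : ∀ i, c i i = 1) (hoff : ∀ i j, i ≠ j → c i j = β) :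
    ∑ i, ∑ j, f i * f j * c i j = (1 - β) * ∑ i, f i ^ 2 + β * (∑ i, f i) ^ 2 := by
  classical
  have hc : ∀ i j, c i j = β + if i = j then 1 - β else 0 := by
    intro i j
    split_ifs with h
    · subst h; rw [hdiag]; ring
    · rw [hoff i j h, add_zero]
  simp only [hc, mul_add, mul_ite, mul_zero, sum_add_distrib, sum_ite_eq, mem_univ, if_true]
  rw [sq (∑ i, f i), sum_mul_sum, mul_sum, add_comm]
  simp only [mul_sum]
  congr 1 <;> refine sum_congr rfl fun i _ => ?_
  · ring
  · exact sum_congr rfl fun j _ => by ring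

lemma sq_add_le_of_sum_eq_zero {d : κ → ℝ} (hd : ∑ m, d m = 0) {k l : κ} (hkl : k ≠ l)
    (s t : ℝ) :
    (s * d k + t * d l) ^ 2 ≤ (s ^ 2 + t ^ 2 - (s + t) ^ 2 / Fintype.card κ) * ∑ m, d m ^ 2 := by
  classical
  set u := (s + t) / Fintype.card κ
  set c : κ → ℝ := fun m => (if m = k then s else 0) + (if m = l then t else 0) - u
  have hdot : ∀ e : κ → ℝ, ∑ m, c m * e m = s * e k + t * e l - u * ∑ m, e m := fun e => by
    simp [c, add_mul, sub_mul, ite_mul, sum_add_distrib, sum_sub_distrib, ← mul_sum]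
  have hc_sum : ∑ m, c m = 0 := by
    have : Nonempty κ := ⟨k⟩
    simpa [u] using hdot 1
  have hc : ∑ m, c m ^ 2 = s ^ 2 + t ^ 2 - (s + t) ^ 2 / Fintype.card κ := by
    simp only [sq, hdot, hc_sum, c, if_pos, if_neg hkl, if_neg hkl.symm, u]
    ring
  calc (s * d k + t * d l) ^ 2 = (∑ m, c m * d m) ^ 2 := by rw [hdot, hd, mul_zero, sub_zero]
    _ ≤ (∑ m, c m ^ 2) * ∑ m, d m ^ 2 := sum_mul_sq_le_sq_mul_sq _ _ _
    _ = _ := by rw [hc]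

lemma sq_le_mul_of_forall_quadratic_nonneg {A B C : ℝ}
    (h : ∀ s t : ℝ, 0 ≤ A * s ^ 2 + 2 * B * (s * t) + C * t ^ 2) :
    0 ≤ A ∧ 0 ≤ C ∧ B ^ 2 ≤ A * C := by
  refine ⟨by simpa using h 1 0, by simpa using h 0 1, ?_⟩
  have hdisc := discrim_le_zero (a := A) (b := 2 * B) (c := C) fun s => by simpa [sq] using h s 1
  rw [discrim] at hdisc
  linarith

noncomputable def weightedFrameOp (v : ι → κ → ℂ) (f : ι → ℝ) : Matrix κ κ ℂ :=
  ∑ i, (f i : ℂ) • vecMulVec (v i) (fun n => conj (v i n))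

omit [Fintype κ] in
lemma weightedFrameOp_apply (v : ι → κ → ℂ) (f : ι → ℝ) (m n : κ) :
    weightedFrameOp v f m n = ∑ i, f i * (v i m * conj (v i n)) := by
  simp [weightedFrameOp, Matrix.sum_apply, vecMulVec_apply]

lemma sum_norm_sq_weightedFrameOp (v : ι → κ → ℂ) (f : ι → ℝ) :
    ∑ m, ∑ n, ‖weightedFrameOp v f m n‖ ^ 2 =
      ∑ i, ∑ j, f i * f j * ‖∑ k, conj (v i k) * v j k‖ ^ 2 := by
  apply Complex.ofReal_injective
  push_cast
  simp only [← Complex.conj_mul', weightedFrameOp_apply, map_sum, map_mul, Complex.conj_conj,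
    Complex.conj_ofReal, sum_mul, mul_sum]
  conv_lhs => enter [2, m]; rw [sum_comm]; enter [2, j]; rw [sum_comm]
  conv_lhs => rw [sum_comm]; enter [2, j]; rw [sum_comm]
  conv_rhs => rw [sum_comm]
  refine sum_congr rfl fun j _ => sum_congr rfl fun i _ => sum_congr rfl fun m _ =>
    sum_congr rfl fun n _ => by ring

omit [Fintype κ] in
lemma weightedFrameOp_apply_self (v : ι → κ → ℂ) (f : ι → ℝ) (m : κ) :
    weightedFrameOp v f m m = ((∑ i, f i * ‖v i m‖ ^ 2 : ℝ) : ℂ) := by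
  simp [weightedFrameOp_apply, Complex.mul_conj']

lemma sum_norm_sq_weightedFrameOp_of_equiangular {v : ι → κ → ℂ} {α : ℝ}
    (hunit : ∀ i, ∑ k, ‖v i k‖ ^ 2 = 1)
    (heq : ∀ i j, i ≠ j → ‖∑ k, conj (v i k) * v j k‖ = α) (f : ι → ℝ) :
    ∑ m, ∑ n, ‖weightedFrameOp v f m n‖ ^ 2 =
      (1 - α ^ 2) * ∑ i, f i ^ 2 + α ^ 2 * (∑ i, f i) ^ 2 := by
  rw [sum_norm_sq_weightedFrameOp]
  refine sum_sum_mul_mul_eq_of_const_offDiag f (fun i => ?_) fun i j hij => by rw [heq i j hij]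
  simp_rw [Complex.conj_mul', ← Complex.ofReal_pow, ← Complex.ofReal_sum, hunit]
  simp

lemma sum_sq_diag_weightedFrameOp_le_of_equiangular {v : ι → κ → ℂ} {α : ℝ}
    (hunit : ∀ i, ∑ k, ‖v i k‖ ^ 2 = 1)
    (heq : ∀ i j, i ≠ j → ‖∑ k, conj (v i k) * v j k‖ = α) (f : ι → ℝ) :
    ∑ m, (∑ i, f i * ‖v i m‖ ^ 2) ^ 2 ≤
      (1 - α ^ 2) * ∑ i, f i ^ 2 + α ^ 2 * (∑ i, f i) ^ 2 :=
  calc ∑ m, (∑ i, f i * ‖v i m‖ ^ 2) ^ 2 = ∑ m, ‖weightedFrameOp v f m m‖ ^ 2 := by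
        simp only [weightedFrameOp_apply_self, Complex.norm_real, Real.norm_eq_abs, sq_abs]
    _ ≤ ∑ m, ∑ n, ‖weightedFrameOp v f m n‖ ^ 2 :=
        sum_le_sum fun m _ => single_le_sum (f := fun n => ‖weightedFrameOp v f m n‖ ^ 2)
          (fun n _ => sq_nonneg _) (mem_univ m)
    _ = _ := sum_norm_sq_weightedFrameOp_of_equiangular hunit heq f

lemma add_sq_div_le_sq_add_sq {r : ℝ} (hr : 2 ≤ r) (s t : ℝ) : (s + t) ^ 2 / r ≤ s ^ 2 + t ^ 2 :=
  calc (s + t) ^ 2 / r ≤ (s + t) ^ 2 / 2 := div_le_div_of_nonneg_left (sq_nonneg _) two_pos hr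
    _ ≤ s ^ 2 + t ^ 2 := by linarith [sq_nonneg (s - t)]

structure IsEquiangularTightFrame [DecidableEq κ] (v : ι → κ → ℂ) (α : ℝ) : Prop where
  sum_norm_sq : ∀ i, ∑ k, ‖v i k‖ ^ 2 = 1
  sum_vecMulVec : ∑ i, vecMulVec (v i) (fun n => conj (v i n)) =
    ((Fintype.card ι : ℂ) / Fintype.card κ) • (1 : Matrix κ κ ℂ)
  norm_inner : ∀ i j, i ≠ j → ‖∑ k, conj (v i k) * v j k‖ = α

namespace IsEquiangularTightFrame

variable [DecidableEq κ] {v : ι → κ → ℂ} {α : ℝ}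

theorem sum_norm_sq_col (hV : IsEquiangularTightFrame v α) (m : κ) :
    ∑ i, ‖v i m‖ ^ 2 = (Fintype.card ι : ℝ) / Fintype.card κ := by
  have h := congrFun (congrFun hV.sum_vecMulVec m) m
  simp only [Matrix.sum_apply, vecMulVec_apply, Complex.mul_conj', Matrix.smul_apply, one_apply_eq,
    smul_eq_mul, mul_one] at h
  rw [← Complex.ofReal_natCast, ← Complex.ofReal_natCast, ← Complex.ofReal_div] at h
  exact_mod_cast h

theorem sq_mul_card_sub_one [Nonempty ι] [Nonempty κ] (hV : IsEquiangularTightFrame v α) :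
    α ^ 2 * (Fintype.card ι - 1) = Fintype.card ι / Fintype.card κ - 1 := by
  have h1 : weightedFrameOp v 1 = ((Fintype.card ι : ℂ) / Fintype.card κ) • 1 := by
    simp [weightedFrameOp, hV.sum_vecMulVec]
  have hG : (Fintype.card κ : ℝ) * ((Fintype.card ι : ℝ) / Fintype.card κ) ^ 2
      = (1 - α ^ 2) * Fintype.card ι + α ^ 2 * (Fintype.card ι : ℝ) ^ 2 := by
    simpa [h1, one_apply, apply_ite] using
      sum_norm_sq_weightedFrameOp_of_equiangular hV.sum_norm_sq hV.norm_inner 1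
  have hN : (Fintype.card ι : ℝ) ≠ 0 := by positivity
  have hr : (Fintype.card κ : ℝ) ≠ 0 := by positivity
  field_simp at hG
  rw [eq_sub_iff_add_eq, eq_div_iff hr]
  linear_combination -hG

theorem sq_le_one [Nonempty κ] (hV : IsEquiangularTightFrame v α) (hN : 1 < Fintype.card ι) :
    α ^ 2 ≤ 1 := by
  have : Nonempty ι := Fintype.card_pos_iff.mp (by omega)
  have hN' : (1 : ℝ) < Fintype.card ι := by exact_mod_cast hN
  have hr : (1 : ℝ) ≤ Fintype.card κ := by exact_mod_cast Fintype.card_pos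
  have hle : α ^ 2 * (Fintype.card ι - 1) ≤ 1 * (Fintype.card ι - 1) := by
    rw [hV.sq_mul_card_sub_one, one_mul]
    linarith [div_le_self (Nat.cast_nonneg (α := ℝ) (Fintype.card ι)) hr]
  exact le_of_mul_le_mul_right hle (by linarith)

theorem sum_sq_rowCombination_le (hV : IsEquiangularTightFrame v α) (hN : 1 < Fintype.card ι)
    {k l : κ} (hkl : k ≠ l) (s t : ℝ) :
    ∑ i, (s * ‖v i k‖ ^ 2 + t * ‖v i l‖ ^ 2 - (s + t) / Fintype.card κ) ^ 2
      ≤ (1 - α ^ 2) * (s ^ 2 + t ^ 2 - (s + t) ^ 2 / Fintype.card κ) := by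
  have : Nonempty κ := ⟨k⟩
  have hcol := hV.sum_norm_sq_col
  set r : ℝ := (Fintype.card κ : ℝ)
  set u := (s + t) / r
  set f : ι → ℝ := fun i => s * ‖v i k‖ ^ 2 + t * ‖v i l‖ ^ 2 - u
  set d : κ → ℝ := fun m => ∑ i, f i * ‖v i m‖ ^ 2
  have hf : ∑ i, f i = 0 := by
    simp only [f, sum_sub_distrib, sum_add_distrib, ← mul_sum, hcol, sum_const, card_univ,
      nsmul_eq_mul, u]
    ring
  have hd : ∑ m, d m = 0 := by
    simp only [d]
    rw [sum_comm]
    simp only [← mul_sum, hV.sum_norm_sq, mul_one, hf]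
  have hH : ∑ i, f i ^ 2 = s * d k + t * d l :=
    calc ∑ i, f i ^ 2 = ∑ i, f i * (s * ‖v i k‖ ^ 2 + t * ‖v i l‖ ^ 2) - u * ∑ i, f i := by
          rw [mul_sum, ← sum_sub_distrib]
          exact sum_congr rfl fun i _ => by simp only [f]; ring
      _ = s * d k + t * d l := by
          rw [hf, mul_zero, sub_zero, mul_sum, mul_sum, ← sum_add_distrib]
          exact sum_congr rfl fun i _ => by ring
  have hdiag : ∑ m, d m ^ 2 ≤ (1 - α ^ 2) * ∑ i, f i ^ 2 := by
    simpa [hf] using sum_sq_diag_weightedFrameOp_le_of_equiangular hV.sum_norm_sq hV.norm_inner f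
  have hcs := sq_add_le_of_sum_eq_zero hd hkl s t
  have hQ : 0 ≤ s ^ 2 + t ^ 2 - (s + t) ^ 2 / r := by
    have : 2 ≤ Fintype.card κ := Fintype.one_lt_card_iff.mpr ⟨k, l, hkl⟩
    exact sub_nonneg.2 (add_sq_div_le_sq_add_sq (Nat.ofNat_le_cast.mpr this) s t)
  have hα := sub_nonneg.2 (hV.sq_le_one hN)
  have hH0 : 0 ≤ ∑ i, f i ^ 2 := sum_nonneg fun i _ => sq_nonneg _
  rw [← hH] at hcs
  nlinarith [mul_nonneg hα hQ]

theorem rows_quadratic_le (hV : IsEquiangularTightFrame v α) (hN : 1 < Fintype.card ι)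
    {k l : κ} (hkl : k ≠ l) (s t : ℝ) :
    s ^ 2 * ∑ i, ‖v i k‖ ^ 4 + 2 * (s * t) * ∑ i, ‖v i k‖ ^ 2 * ‖v i l‖ ^ 2
        + t ^ 2 * ∑ i, ‖v i l‖ ^ 4
      ≤ Fintype.card ι * (s + t) ^ 2 / Fintype.card κ ^ 2
        + (1 - α ^ 2) * (s ^ 2 + t ^ 2 - (s + t) ^ 2 / Fintype.card κ) := by
  have : Nonempty κ := ⟨k⟩
  have hr : (Fintype.card κ : ℝ) ≠ 0 := by positivity
  set u := (s + t) / Fintype.card κ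
  have hexp : ∑ i, (s * ‖v i k‖ ^ 2 + t * ‖v i l‖ ^ 2 - u) ^ 2
      = s ^ 2 * ∑ i, ‖v i k‖ ^ 4 + 2 * (s * t) * ∑ i, ‖v i k‖ ^ 2 * ‖v i l‖ ^ 2
        + t ^ 2 * ∑ i, ‖v i l‖ ^ 4 - 2 * u * (s * ∑ i, ‖v i k‖ ^ 2 + t * ∑ i, ‖v i l‖ ^ 2)
        + Fintype.card ι * u ^ 2 := by
    simp only [mul_sum, ← sum_add_distrib, ← sum_sub_distrib, ← card_univ, ← nsmul_eq_mul,
      ← sum_const]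
    exact sum_congr rfl fun i _ => by ring
  have hle := hV.sum_sq_rowCombination_le hN hkl s t
  rw [hexp, hV.sum_norm_sq_col, hV.sum_norm_sq_col] at hle
  simp only [u] at hle
  field_simp at hle ⊢
  linarith

end IsEquiangularTightFrame

theorem stmt_17_general (N r : ℕ) (hNr : r < N)
    (v : Fin N → Fin r → ℂ)
    (hunit : ∀ i, ∑ k, ‖v i k‖ ^ 2 = 1)
    (htight : (∑ i, Matrix.vecMulVec (v i) (fun l => (starRingEnd ℂ) (v i l)))
      = ((N : ℂ) / (r : ℂ)) • (1 : Matrix (Fin r) (Fin r) ℂ))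
    (α : ℝ)
    (heq : ∀ i j : Fin N, i ≠ j → ‖∑ k, (starRingEnd ℂ) (v i k) * v j k‖ = α)
    (k l : Fin r) (hkl : k ≠ l)
    (a b : Fin N → ℂ) (ha : a = fun i => v i k) (hb : b = fun i => v i l)
    (D E : ℝ)
    (hD : D = ((N : ℝ) / (r : ℝ) ^ 2) * (1 + ((r : ℝ) - 1) ^ 2 / ((N : ℝ) - 1)))
    (hE : E = ((N : ℝ) / (r : ℝ) - 1) / ((r : ℝ) * (1 - 1 / (N : ℝ)))) :
    (∑ i, ‖a i‖ ^ 4) ≤ D ∧ (∑ i, ‖b i‖ ^ 4) ≤ D ∧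
      ((∑ i, ‖a i‖ ^ 2 * ‖b i‖ ^ 2) - E) ^ 2
        ≤ (D - ∑ i, ‖a i‖ ^ 4) * (D - ∑ i, ‖b i‖ ^ 4) := by
  subst ha hb
  have hN : 1 < N := by have := k.pos; omega
  have : Nonempty (Fin r) := ⟨k⟩
  have : Nonempty (Fin N) := ⟨⟨0, by omega⟩⟩
  have hV : IsEquiangularTightFrame v α := ⟨hunit, by simpa using htight, heq⟩
  have hN1 : (N : ℝ) - 1 ≠ 0 := sub_ne_zero.mpr (Nat.one_lt_cast.mpr hN).ne'
  have hα : α ^ 2 = ((N : ℝ) / r - 1) / (N - 1) := by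
    have := hV.sq_mul_card_sub_one
    rw [Fintype.card_fin, Fintype.card_fin] at this
    exact eq_div_of_mul_eq hN1 this
  have hform : ∀ s t : ℝ, 0 ≤ (D - ∑ i, ‖v i k‖ ^ 4) * s ^ 2
      + 2 * (E - ∑ i, ‖v i k‖ ^ 2 * ‖v i l‖ ^ 2) * (s * t) + (D - ∑ i, ‖v i l‖ ^ 4) * t ^ 2 := by
    intro s t
    have hle := hV.rows_quadratic_le (by rwa [Fintype.card_fin]) hkl s t
    have hDE : (N : ℝ) * (s + t) ^ 2 / r ^ 2 + (1 - α ^ 2) * (s ^ 2 + t ^ 2 - (s + t) ^ 2 / r)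
        = D * (s ^ 2 + t ^ 2) + 2 * E * (s * t) := by
      have : (N : ℝ) ≠ 0 := Nat.cast_ne_zero.mpr (by omega)
      have : (r : ℝ) ≠ 0 := Nat.cast_ne_zero.mpr (by omega)
      rw [hD, hE, hα]
      field_simp
      ring
    simp only [Fintype.card_fin] at hle
    linarith
  obtain ⟨hA, hC, hB⟩ := sq_le_mul_of_forall_quadratic_nonneg hform
  refine ⟨by linarith, by linarith, ?_⟩
  rwa [← neg_sub, neg_sq]

/-- Overlap bound for two distinct rows `a`, `b` of an ETF synthesis matrix:
    `D ≥ ‖a‖₄⁴`, `D ≥ ‖b‖₄⁴`, and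
    `|⟨|a|², |b|²⟩ - E|² ≤ (D - ‖a‖₄⁴)(D - ‖b‖₄⁴)`. -/
theorem stmt_17 (N r : ℕ) (hr : 2 ≤ r) (hNr : r < N)
    (v : Fin N → Fin r → ℂ)
    (hunit : ∀ i, ∑ k, ‖v i k‖ ^ 2 = 1)
    (htight : (∑ i, Matrix.vecMulVec (v i) (fun l => (starRingEnd ℂ) (v i l)))
      = ((N : ℂ) / (r : ℂ)) • (1 : Matrix (Fin r) (Fin r) ℂ))
    (α : ℝ)
    (heq : ∀ i j : Fin N, i ≠ j → ‖∑ k, (starRingEnd ℂ) (v i k) * v j k‖ = α)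
    (k l : Fin r) (hkl : k ≠ l)
    (a b : Fin N → ℂ) (ha : a = fun i => v i k) (hb : b = fun i => v i l)
    (D E : ℝ)
    (hD : D = ((N : ℝ) / (r : ℝ) ^ 2) * (1 + ((r : ℝ) - 1) ^ 2 / ((N : ℝ) - 1)))
    (hE : E = ((N : ℝ) / (r : ℝ) - 1) / ((r : ℝ) * (1 - 1 / (N : ℝ)))) :
    (∑ i, ‖a i‖ ^ 4) ≤ D ∧ (∑ i, ‖b i‖ ^ 4) ≤ D ∧
      ((∑ i, ‖a i‖ ^ 2 * ‖b i‖ ^ 2) - E) ^ 2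
        ≤ (D - ∑ i, ‖a i‖ ^ 4) * (D - ∑ i, ‖b i‖ ^ 4) :=
  stmt_17_general N r hNr v hunit htight α heq k l hkl a b ha hb D E hD hE
end
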